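/- arXiv:1410.5904 — 11 statements merged into one kernel-verified Lean document; each statement's English description precedes it below -/
import Mathlib

section
/- Let 0 < P_fa < P_d < 1, and let α_1,…,α_k ∈ [0,1] and flipping probabilities P_{1,0}^j, P_{0,1}^j ∈ [0,1] (j = 1,…,k) be given. With β_{1,0} = Σ_{j=1}^k α_j P_{1,0}^j, β_{0,1} = Σ_{j=1}^k α_j P_{0,1}^j, π_{1,0} = β_{1,0}(1−P_fa) + (1−β_{0,1})P_fa and π_{1,1} = β_{1,0}(1−P_d) + (1−β_{0,1})P_d, one has π_{1,0} = π_{1,1} if and only if Σ_{j=1}^k α_j (P_{1,0}^j + P_{0,1}^j) = 1. -/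
open Finset

theorem mul_one_sub_add_one_sub_mul_eq_iff {R : Type*} [CommRing R] [NoZeroDivisors R]
    {a b x y : R} (hab : a ≠ b) :
    x * (1 - a) + (1 - y) * a = x * (1 - b) + (1 - y) * b ↔ x + y = 1 := by
  rw [← sub_eq_zero,
    show x * (1 - a) + (1 - y) * a - (x * (1 - b) + (1 - y) * b) = (b - a) * (x + y - 1) by ring,
    mul_eq_zero, sub_eq_zero, sub_eq_zero, or_iff_right hab.symm]

theorem stmt_0_general (k : ℕ) (α P10 P01 : ℕ → ℝ) (Pfa Pd : ℝ)
    (hPfaPd : Pfa < Pd)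
    (β10 β01 π10 π11 : ℝ)
    (hβ10 : β10 = ∑ j ∈ range k, α j * P10 j)
    (hβ01 : β01 = ∑ j ∈ range k, α j * P01 j)
    (hπ10 : π10 = β10 * (1 - Pfa) + (1 - β01) * Pfa)
    (hπ11 : π11 = β10 * (1 - Pd) + (1 - β01) * Pd) :
    π10 = π11 ↔ ∑ j ∈ range k, α j * (P10 j + P01 j) = 1 := by
  have hsum : ∑ j ∈ range k, α j * (P10 j + P01 j) = β10 + β01 := by
    simp only [hβ10, hβ01, mul_add, sum_add_distrib]
  rw [hsum, hπ10, hπ11]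
  exact mul_one_sub_add_one_sub_mul_eq_iff hPfaPd.ne

/-- Blinding condition: with `0 < P_fa < P_d < 1`, the received-bit probabilities under the
two hypotheses coincide (`π₁₀ = π₁₁`) iff `∑ αⱼ (P₁₀ʲ + P₀₁ʲ) = 1`. -/
theorem stmt_0 (k : ℕ) (α P10 P01 : ℕ → ℝ) (Pfa Pd : ℝ)
    (hPfa : 0 < Pfa) (hPfaPd : Pfa < Pd) (hPd : Pd < 1)
    (hα : ∀ j < k, α j ∈ Set.Icc (0 : ℝ) 1)
    (hP10 : ∀ j < k, P10 j ∈ Set.Icc (0 : ℝ) 1)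
    (hP01 : ∀ j < k, P01 j ∈ Set.Icc (0 : ℝ) 1)
    (β10 β01 π10 π11 : ℝ)
    (hβ10 : β10 = ∑ j ∈ range k, α j * P10 j)
    (hβ01 : β01 = ∑ j ∈ range k, α j * P01 j)
    (hπ10 : π10 = β10 * (1 - Pfa) + (1 - β01) * Pfa)
    (hπ11 : π11 = β10 * (1 - Pd) + (1 - β01) * Pd) :
    π10 = π11 ↔ ∑ j ∈ range k, α j * (P10 j + P01 j) = 1 :=
  stmt_0_general k α P10 P01 Pfa Pd hPfaPd β10 β01 π10 π11 hβ10 hβ01 hπ10 hπ11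
end

section
/- Let 0 < P_fa < P_d < 1, α_1,…,α_k ∈ [0,1] with Σ_{j=1}^k α_j < 1/2, and arbitrary flipping probabilities P_{1,0}^j, P_{0,1}^j ∈ [0,1]. With β_{1,0} = Σ_{j=1}^k α_j P_{1,0}^j, β_{0,1} = Σ_{j=1}^k α_j P_{0,1}^j, π_{1,0} = β_{1,0}(1−P_fa) + (1−β_{0,1})P_fa and π_{1,1} = β_{1,0}(1−P_d) + (1−β_{0,1})P_d, one has π_{1,1} > π_{1,0}, and consequently the Bernoulli Kullback–Leibler divergence D_k = π_{1,0} log(π_{1,0}/π_{1,1}) + (1−π_{1,0}) log((1−π_{1,0})/(1−π_{1,1})) is strictly positive; no choice of flipping probabilities can make D_k = 0. -/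
/-!
Both `π₁₀` and `π₁₁` are the same affine function of the node's operating point
(`P_fa`, resp. `P_d`), with slope `1 - β₁₀ - β₀₁`. Each `β` is at most `∑ αⱼ < 1/2`, so the
slope is positive and `π₁₀ < π₁₁`; both values lie in `(0, 1)`, and the Kullback–Leibler
divergence between two distinct nondegenerate Bernoulli laws is positive by `log x < x - 1`.
-/

open Finset Real

lemma sub_lt_mul_log_div {p q : ℝ} (hp : 0 < p) (hq : 0 < q) (hpq : p ≠ q) :
    p - q < p * log (p / q) := by
  have hlog : log (q / p) < q / p - 1 :=
    log_lt_sub_one_of_pos (div_pos hq hp) (by rwa [ne_eq, div_eq_one_iff_eq hp.ne', eq_comm])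
  have hinv : log (p / q) = -log (q / p) := by rw [← log_inv, inv_div]
  have hmul : p * (q / p - 1) = q - p := by field_simp
  rw [hinv]
  nlinarith [mul_lt_mul_of_pos_left hlog hp]

lemma bernoulli_kl_pos {p q : ℝ} (hp₀ : 0 < p) (hp₁ : p < 1) (hq₀ : 0 < q) (hq₁ : q < 1)
    (hpq : p ≠ q) : 0 < p * log (p / q) + (1 - p) * log ((1 - p) / (1 - q)) := by
  have h₁ := sub_lt_mul_log_div hp₀ hq₀ hpq
  have h₂ := sub_lt_mul_log_div (sub_pos.2 hp₁) (sub_pos.2 hq₁) (sub_right_injective.ne hpq)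
  linarith

lemma sum_mul_mem_Icc {ι : Type*} {s : Finset ι} {α P : ι → ℝ} (hα : ∀ j ∈ s, 0 ≤ α j)
    (hP : ∀ j ∈ s, P j ∈ Set.Icc 0 1) :
    ∑ j ∈ s, α j * P j ∈ Set.Icc 0 (∑ j ∈ s, α j) :=
  ⟨sum_nonneg fun j hj => mul_nonneg (hα j hj) (hP j hj).1,
    sum_le_sum fun j hj => mul_le_of_le_one_right (hα j hj) (hP j hj).2⟩

/-- In the paper's notation `π₁₀ = fusionOneProb β₁₀ β₀₁ P_fa` and
`π₁₁ = fusionOneProb β₁₀ β₀₁ P_d`. -/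
def fusionOneProb (β₁₀ β₀₁ P : ℝ) : ℝ := β₁₀ * (1 - P) + (1 - β₀₁) * P

section fusionOneProb

variable {β₁₀ β₀₁ P P' : ℝ}

lemma fusionOneProb_lt_fusionOneProb (hβ : β₁₀ + β₀₁ < 1) (hP : P < P') :
    fusionOneProb β₁₀ β₀₁ P < fusionOneProb β₁₀ β₀₁ P' := by
  have hslope : fusionOneProb β₁₀ β₀₁ P' - fusionOneProb β₁₀ β₀₁ P
      = (P' - P) * (1 - β₁₀ - β₀₁) := by
    unfold fusionOneProb; ring
  have : 0 < (P' - P) * (1 - β₁₀ - β₀₁) := mul_pos (sub_pos.2 hP) (by linarith)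
  linarith

lemma fusionOneProb_pos (hβ₁₀ : 0 ≤ β₁₀) (hβ₀₁ : β₀₁ < 1) (hP₀ : 0 < P) (hP₁ : P ≤ 1) :
    0 < fusionOneProb β₁₀ β₀₁ P := by
  have := mul_nonneg hβ₁₀ (sub_nonneg.2 hP₁)
  have := mul_pos (sub_pos.2 hβ₀₁) hP₀
  unfold fusionOneProb
  linarith

lemma fusionOneProb_lt_one (hβ₁₀ : β₁₀ < 1) (hβ₀₁ : 0 ≤ β₀₁) (hP₀ : 0 ≤ P) (hP₁ : P < 1) :
    fusionOneProb β₁₀ β₀₁ P < 1 := by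
  have := mul_pos (sub_pos.2 hβ₁₀) (sub_pos.2 hP₁)
  have := mul_nonneg hβ₀₁ hP₀
  unfold fusionOneProb
  linarith

end fusionOneProb

/-- If `∑ αⱼ < 1/2`, then `π₁₁ > π₁₀` and the Bernoulli KL divergence `D_k` is strictly
positive: no choice of flipping probabilities can make `D_k = 0`. -/
theorem stmt_1 (k : ℕ) (α P10 P01 : ℕ → ℝ) (Pfa Pd : ℝ)
    (hPfa : 0 < Pfa) (hPfaPd : Pfa < Pd) (hPd : Pd < 1)
    (hα : ∀ j < k, α j ∈ Set.Icc (0 : ℝ) 1)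
    (hαsum : ∑ j ∈ range k, α j < 1 / 2)
    (hP10 : ∀ j < k, P10 j ∈ Set.Icc (0 : ℝ) 1)
    (hP01 : ∀ j < k, P01 j ∈ Set.Icc (0 : ℝ) 1)
    (β10 β01 π10 π11 Dk : ℝ)
    (hβ10 : β10 = ∑ j ∈ range k, α j * P10 j)
    (hβ01 : β01 = ∑ j ∈ range k, α j * P01 j)
    (hπ10 : π10 = β10 * (1 - Pfa) + (1 - β01) * Pfa)
    (hπ11 : π11 = β10 * (1 - Pd) + (1 - β01) * Pd)
    (hDk : Dk = π10 * Real.log (π10 / π11) +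
      (1 - π10) * Real.log ((1 - π10) / (1 - π11))) :
    π10 < π11 ∧ 0 < Dk := by
  have hα₀ : ∀ j ∈ range k, 0 ≤ α j := fun j hj => (hα j (mem_range.1 hj)).1
  obtain ⟨hβ10₀, hβ10_le⟩ : β10 ∈ Set.Icc 0 (∑ j ∈ range k, α j) :=
    hβ10 ▸ sum_mul_mem_Icc hα₀ fun j hj => hP10 j (mem_range.1 hj)
  obtain ⟨hβ01₀, hβ01_le⟩ : β01 ∈ Set.Icc 0 (∑ j ∈ range k, α j) :=
    hβ01 ▸ sum_mul_mem_Icc hα₀ fun j hj => hP01 j (mem_range.1 hj)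
  have hlt : π10 < π11 := by
    rw [hπ10, hπ11]
    exact fusionOneProb_lt_fusionOneProb (by linarith) hPfaPd
  have hπ10₀ : 0 < π10 := by
    rw [hπ10]
    exact fusionOneProb_pos hβ10₀ (by linarith) hPfa (by linarith)
  have hπ11₁ : π11 < 1 := by
    rw [hπ11]
    exact fusionOneProb_lt_one (by linarith) hβ01₀ (by linarith) hPd
  exact ⟨hlt, hDk ▸ bernoulli_kl_pos hπ10₀ (hlt.trans hπ11₁) (hπ10₀.trans hlt) hπ11₁ hlt.ne⟩
end

section
/- Let 0 < P_fa < P_d < 1, α ∈ (0,1], p ∈ (0,1], and β'_{1,0}, β'_{0,1} ≥ 0 with β'_{1,0} + α p < 1/2 and β'_{0,1} + α p < 1/2. For ε ∈ [0,p] set β_{1,0} = β'_{1,0} + α p, β_{0,1}(ε) = β'_{0,1} + α(p−ε), π_{1,1}(ε) = β_{1,0}(1−P_d) + (1−β_{0,1}(ε))P_d and π_{1,0}(ε) = β_{1,0}(1−P_fa) + (1−β_{0,1}(ε))P_fa. Then the Bernoulli Kullback–Leibler divergence D_k(ε) = π_{1,0}(ε) log(π_{1,0}(ε)/π_{1,1}(ε))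 + (1−π_{1,0}(ε)) log((1−π_{1,0}(ε))/(1−π_{1,1}(ε))) is strictly increasing in ε on [0,p]. That is, deviating from symmetric flipping probabilities (P_{1,0}, P_{0,1}) = (p,p) to (p, p−ε) with ε > 0 strictly increases D_k. -/
/-!
Write `c = β₁₀` and `t(ε) = 1 - β₁₀ - β₀₁(ε)`, so that `π₁,₀ = c + t P_fa` and `π₁,₁ = c + t P_d`;
`t` grows with `ε`. Shrinking `t` to `s < t` replaces the pair `(π₁,₀, π₁,₁)` by the convex
combination `(s/t) (π₁,₀, π₁,₁) + (1 - s/t) (c, c)`. The KL divergence is jointly convex and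
vanishes on the diagonal, so it drops by at least the factor `s/t`, strictly because
`P_fa ≠ P_d`. Joint convexity of `x log (x / y)` is the convexity of `u log u` seen through
the perspective map.
-/

/-- Probability of receiving a 1, given aggregate flipping probabilities
`β₁₀`, `β₀₁` and local decision probability `P`. -/
noncomputable def piProb (β10 β01 P : ℝ) : ℝ := β10 * (1 - P) + (1 - β01) * P

/-- Bernoulli Kullback–Leibler divergence between success probabilities `a` and `b`. -/
noncomputable def klBern (a b : ℝ) : ℝ :=
  a * Real.log (a / b) + (1 - a) * Real.log ((1 - a) / (1 - b))

open Real

lemma mul_mul_log_div_div {x y : ℝ} (hy : 0 < y) :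
    y * (x / y * log (x / y)) = x * log (x / y) := by
  field_simp

lemma mul_log_div_convexCombination_diag_lt {x y c t : ℝ} (hx : 0 ≤ x) (hy : 0 < y)
    (hc : 0 < c) (hxy : x ≠ y) (ht₀ : 0 < t) (ht₁ : t < 1) :
    (t * x + (1 - t) * c) * log ((t * x + (1 - t) * c) / (t * y + (1 - t) * c)) <
      t * (x * log (x / y)) := by
  set Y := t * y + (1 - t) * c
  have hY : 0 < Y := by nlinarith
  have hw₁ : 0 < t * y / Y := by positivity
  have hw₂ : 0 < (1 - t) * c / Y := div_pos (by nlinarith) hY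
  have hsum : t * y / Y + (1 - t) * c / Y = 1 := by rw [← add_div, div_self hY.ne']
  have hne : x / y ≠ 1 := fun h => hxy ((div_eq_one_iff_eq hy.ne').mp h)
  have hstrict := strictConvexOn_mul_log.2 (Set.mem_Ici.mpr (div_nonneg hx hy.le))
    (Set.mem_Ici.mpr zero_le_one) hne hw₁ hw₂ hsum
  have hmix : t * y / Y * (x / y) + (1 - t) * c / Y * 1 = (t * x + (1 - t) * c) / Y := by
    field_simp
  simp only [smul_eq_mul, hmix, log_one, mul_zero, add_zero] at hstrict
  calc (t * x + (1 - t) * c) * log ((t * x + (1 - t) * c) / Y)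
      = Y * ((t * x + (1 - t) * c) / Y * log ((t * x + (1 - t) * c) / Y)) :=
        (mul_mul_log_div_div hY).symm
    _ < Y * (t * y / Y * (x / y * log (x / y))) := mul_lt_mul_of_pos_left hstrict hY
    _ = t * (y * (x / y * log (x / y))) := by field_simp
    _ = t * (x * log (x / y)) := by rw [mul_mul_log_div_div hy]

lemma klBern_nonneg {a b : ℝ} (ha₀ : 0 ≤ a) (ha₁ : a ≤ 1) (hb₀ : 0 < b) (hb₁ : b < 1) :
    0 ≤ klBern a b := by
  have hb₁' : 0 < 1 - b := sub_pos.mpr hb₁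
  have jensen := convexOn_mul_log.2 (Set.mem_Ici.mpr (div_nonneg ha₀ hb₀.le))
    (Set.mem_Ici.mpr (div_nonneg (sub_nonneg.mpr ha₁) hb₁'.le)) hb₀.le hb₁'.le
    (add_sub_cancel b 1)
  have hmean : b * (a / b) + (1 - b) * ((1 - a) / (1 - b)) = 1 := by
    field_simp
    ring
  simp only [smul_eq_mul, hmean, one_mul, log_one] at jensen
  rw [mul_mul_log_div_div hb₀, mul_mul_log_div_div hb₁'] at jensen
  exact jensen

lemma klBern_convexCombination_diag_lt {a b c t : ℝ} (ha₀ : 0 ≤ a) (ha₁ : a ≤ 1)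
    (hb₀ : 0 < b) (hb₁ : b < 1) (hc₀ : 0 < c) (hc₁ : c < 1) (hab : a ≠ b)
    (ht₀ : 0 < t) (ht₁ : t < 1) :
    klBern (t * a + (1 - t) * c) (t * b + (1 - t) * c) < klBern a b := by
  have hfirst := mul_log_div_convexCombination_diag_lt ha₀ hb₀ hc₀ hab ht₀ ht₁
  have hsecond := mul_log_div_convexCombination_diag_lt (sub_nonneg.mpr ha₁) (sub_pos.mpr hb₁)
    (sub_pos.mpr hc₁) (sub_right_injective.ne hab) ht₀ ht₁
  have hcompl : ∀ x, 1 - (t * x + (1 - t) * c) = t * (1 - x) + (1 - t) * (1 - c) := fun x => by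
    ring
  calc klBern (t * a + (1 - t) * c) (t * b + (1 - t) * c)
      < t * klBern a b := by
        simp only [klBern, hcompl]
        linarith
    _ ≤ klBern a b :=
        mul_le_of_le_one_left (klBern_nonneg ha₀ ha₁ hb₀ hb₁) ht₁.le

lemma klBern_lt_klBern_of_lt {c u v s t : ℝ} (hc₀ : 0 < c) (hc₁ : c < 1) (huv : u ≠ v)
    (hs : 0 < s) (hst : s < t) (hu₀ : 0 ≤ c + t * u) (hu₁ : c + t * u ≤ 1)
    (hv₀ : 0 < c + t * v) (hv₁ : c + t * v < 1) :
    klBern (c + s * u) (c + s * v) < klBern (c + t * u) (c + t * v) := by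
  have ht : 0 < t := hs.trans hst
  have hmix : ∀ w, c + s * w = s / t * (c + t * w) + (1 - s / t) * c := fun w => by
    field_simp
    ring
  rw [hmix u, hmix v]
  refine klBern_convexCombination_diag_lt hu₀ hu₁ hv₀ hv₁ hc₀ hc₁ ?_ (div_pos hs ht)
    ((div_lt_one ht).mpr hst)
  intro h
  exact huv (mul_left_cancel₀ ht.ne' (add_left_cancel h))

lemma piProb_eq (β10 β01 P : ℝ) : piProb β10 β01 P = β10 + (1 - β10 - β01) * P := by
  unfold piProb
  ring

theorem stmt_4_general (Pfa Pd α p β10' β01' : ℝ)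
    (hPfa : 0 < Pfa) (hPfaPd : Pfa < Pd) (hPd : Pd < 1)
    (hα : α ∈ Set.Ioc (0 : ℝ) 1)
    (hβ10' : 0 ≤ β10') (hβ01' : 0 ≤ β01')
    (h10 : β10' + α * p < 1 / 2) (h01 : β01' + α * p < 1 / 2) :
    StrictMonoOn
      (fun ε : ℝ =>
        klBern (piProb (β10' + α * p) (β01' + α * (p - ε)) Pfa)
               (piProb (β10' + α * p) (β01' + α * (p - ε)) Pd))
      (Set.Icc 0 p) := by
  rintro ε₁ ⟨hε₁, -⟩ ε₂ ⟨-, hε₂⟩ hε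
  simp only [piProb_eq]
  set c := β10' + α * p
  set t₁ := 1 - c - (β01' + α * (p - ε₁))
  set t₂ := 1 - c - (β01' + α * (p - ε₂))
  have hc : 0 < c := add_pos_of_nonneg_of_pos hβ10' (mul_pos hα.1 (by linarith))
  have ht₁ : 0 < t₁ := by nlinarith [hα.1]
  have ht₁₂ : t₁ < t₂ := by nlinarith [hα.1]
  have ht₂ : 0 < t₂ := ht₁.trans ht₁₂
  have hβ01 : 0 ≤ β01' + α * (p - ε₂) := by nlinarith [hα.1]
  have hPfa_lt : t₂ * Pfa < t₂ * Pd := mul_lt_mul_of_pos_left hPfaPd ht₂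
  have hPd_lt : t₂ * Pd < t₂ := mul_lt_of_lt_one_right ht₂ hPd
  exact klBern_lt_klBern_of_lt hc (by linarith) hPfaPd.ne ht₁ ht₁₂
    (add_nonneg hc.le (mul_pos ht₂ hPfa).le) (by linarith)
    (add_pos hc (mul_pos ht₂ (hPfa.trans hPfaPd))) (by linarith)

/-- Deviating from the symmetric flipping strategy `(p, p)` to `(p, p − ε)` strictly
increases the level-`k` KL divergence: `D_k(ε)` is strictly increasing on `[0, p]`. -/
theorem stmt_4 (Pfa Pd α p β10' β01' : ℝ)
    (hPfa : 0 < Pfa) (hPfaPd : Pfa < Pd) (hPd : Pd < 1)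
    (hα : α ∈ Set.Ioc (0 : ℝ) 1) (hp : p ∈ Set.Ioc (0 : ℝ) 1)
    (hβ10' : 0 ≤ β10') (hβ01' : 0 ≤ β01')
    (h10 : β10' + α * p < 1 / 2) (h01 : β01' + α * p < 1 / 2) :
    StrictMonoOn
      (fun ε : ℝ =>
        klBern (piProb (β10' + α * p) (β01' + α * (p - ε)) Pfa)
               (piProb (β10' + α * p) (β01' + α * (p - ε)) Pd))
      (Set.Icc 0 p) :=
  stmt_4_general Pfa Pd α p β10' β01' hPfa hPfaPd hPd hα hβ10' hβ01' h10 h01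
end

section
/- Let 0 < P_fa < P_d < 1, α ∈ (0,1], p ∈ (0,1], and β'_{1,0}, β'_{0,1} ≥ 0 with β'_{1,0} + α p < 1/2 and β'_{0,1} + α p < 1/2. For ε ∈ [0,p] set β_{1,0}(ε) = β'_{1,0} + α(p−ε), β_{0,1} = β'_{0,1} + α p, π_{1,1}(ε) = β_{1,0}(ε)(1−P_d) + (1−β_{0,1})P_d and π_{1,0}(ε) = β_{1,0}(ε)(1−P_fa) + (1−β_{0,1})P_fa. Then the Bernoulli Kullback–Leibler divergence D_k(ε) = π_{1,0}(ε) log(π_{1,0}(ε)/π_{1,1}(ε)) + (1−π_{1,0}(ε)) log((1−π_{1,0}(ε))/(1−π_{1,1}(ε))) is strictly increasing in ε on [0,p]. That is, deviating from symmetric flipping probabilities (P_{1,0}, P_{0,1}) = (p,p) to (p−ε, p) with ε > 0 strictly increases D_k. -/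
/-!
Write `t = β'₁₀ + α (p - ε)` and `c = β'₀₁ + α p`, so that `D_k(ε) = g(t)` with
`g(t) = KL(π(t, Pfa) ‖ π(t, Pd))` and `π(t, P) = t (1 - P) + (1 - c) P` affine in `t`. Since `t`
decreases with `ε`, it suffices that `g` decreases on `[0, 1 - c)`. Along the line, the two
arguments `a < b` move with speeds `1 - Pfa` and `1 - Pd`, and `(1 - Pd)(1 - a) ≤ (1 - Pfa)(1 - b)`
(the difference is `c (Pd - Pfa)`). Bounding both logarithms in `g'` by `log x ≤ x - 1`
then shows `g' < 0`.
-/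

theorem HasDerivAt.klBern {f g : ℝ → ℝ} {f' g' x : ℝ} (hf : HasDerivAt f f' x)
    (hg : HasDerivAt g g' x) (hf0 : f x ≠ 0) (hg0 : g x ≠ 0) (hf1 : f x ≠ 1) (hg1 : g x ≠ 1) :
    HasDerivAt (fun y => klBern (f y) (g y))
      (f' * (Real.log (f x / g x) - Real.log ((1 - f x) / (1 - g x)))
        + g' * ((1 - f x) / (1 - g x) - f x / g x)) x := by
  have hf1' : 1 - f x ≠ 0 := sub_ne_zero.mpr hf1.symm
  have hg1' : 1 - g x ≠ 0 := sub_ne_zero.mpr hg1.symm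
  have hlog := (hf.div hg hg0).log (div_ne_zero hf0 hg0)
  have hlog' := ((hf.const_sub 1).div (hg.const_sub 1) hg1').log (div_ne_zero hf1' hg1')
  refine ((hf.mul hlog).add ((hf.const_sub 1).mul hlog')).congr_deriv ?_
  simp only [Pi.div_apply]
  field_simp
  ring

theorem klBern_directional_deriv_neg {a b u v : ℝ} (ha : 0 < a) (hab : a < b) (hb : b < 1)
    (hu : 0 < u) (huv : v * (1 - a) ≤ u * (1 - b)) :
    u * (Real.log (a / b) - Real.log ((1 - a) / (1 - b)))
      + v * ((1 - a) / (1 - b) - a / b) < 0 := by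
  have hb0 : 0 < b := ha.trans hab
  have ha1 : 0 < 1 - a := by linarith
  have hb1 : 0 < 1 - b := by linarith
  have hlog : Real.log (a / b) - Real.log ((1 - a) / (1 - b))
      ≤ (a - b) / b + (a - b) / (1 - a) := by
    have h₁ := Real.log_le_sub_one_of_pos (div_pos ha hb0)
    have h₂ := Real.log_le_sub_one_of_pos (div_pos hb1 ha1)
    rw [Real.log_div hb1.ne' ha1.ne', ← neg_sub, ← Real.log_div ha1.ne' hb1.ne'] at h₂
    have e₁ : a / b - 1 = (a - b) / b := by field_simp
    have e₂ : (1 - b) / (1 - a) - 1 = (a - b) / (1 - a) := by field_simp; ring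
    linarith
  have hsum : u * ((a - b) / b + (a - b) / (1 - a)) + v * ((1 - a) / (1 - b) - a / b) < 0 := by
    have e : u * ((a - b) / b + (a - b) / (1 - a)) + v * ((1 - a) / (1 - b) - a / b)
        = (b - a) * (v * (1 - a) - u * (1 - b) * (1 - a + b)) / (b * (1 - a) * (1 - b)) := by
      field_simp
      ring
    rw [e]
    refine div_neg_of_neg_of_pos (mul_neg_of_pos_of_neg (by linarith) ?_) (by positivity)
    nlinarith [mul_pos (mul_pos hu hb1) hb0]
  nlinarith [mul_le_mul_of_nonneg_left hlog hu.le]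

theorem hasDerivAt_piProb (c P t : ℝ) : HasDerivAt (fun t => piProb t c P) (1 - P) t :=
  (hasDerivAt_mul_const (1 - P)).add_const ((1 - c) * P)

theorem one_sub_piProb (t c P : ℝ) : 1 - piProb t c P = (1 - P) * (1 - t) + c * P := by
  unfold piProb; ring

theorem piProb_pos {t c P : ℝ} (ht : 0 ≤ t) (hc : c < 1) (hP : 0 < P) (hP1 : P ≤ 1) :
    0 < piProb t c P := by
  unfold piProb; nlinarith

theorem piProb_lt_one {t c P : ℝ} (ht : t < 1) (hc : 0 ≤ c) (hP : 0 ≤ P) (hP1 : P < 1) :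
    piProb t c P < 1 := by
  have := one_sub_piProb t c P; nlinarith

theorem piProb_lt_piProb {t c P Q : ℝ} (htc : t + c < 1) (hPQ : P < Q) :
    piProb t c P < piProb t c Q := by
  unfold piProb; nlinarith

theorem strictAntiOn_klBern_piProb {c Pfa Pd : ℝ} (hc : 0 ≤ c)
    (hPfa : 0 < Pfa) (hPfaPd : Pfa < Pd) (hPd : Pd < 1) :
    StrictAntiOn (fun t => klBern (piProb t c Pfa) (piProb t c Pd)) (Set.Ico 0 (1 - c)) := by
  have hneg_deriv : ∀ t ∈ Set.Ico 0 (1 - c), ∃ d < 0,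
      HasDerivAt (fun t => klBern (piProb t c Pfa) (piProb t c Pd)) d t := by
    rintro t ⟨ht0, htc⟩
    have ha : 0 < piProb t c Pfa := piProb_pos ht0 (by linarith) hPfa (by linarith)
    have hab : piProb t c Pfa < piProb t c Pd := piProb_lt_piProb (by linarith) hPfaPd
    have hb : piProb t c Pd < 1 := piProb_lt_one (by linarith) hc (by linarith) hPd
    have hspeeds : (1 - Pd) * (1 - piProb t c Pfa) ≤ (1 - Pfa) * (1 - piProb t c Pd) := by
      rw [one_sub_piProb, one_sub_piProb]
      nlinarith [mul_nonneg hc (sub_nonneg.mpr hPfaPd.le)]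
    exact ⟨_, klBern_directional_deriv_neg ha hab hb (by linarith) hspeeds,
      (hasDerivAt_piProb c Pfa t).klBern (hasDerivAt_piProb c Pd t) ha.ne' (ha.trans hab).ne'
        (hab.trans hb).ne hb.ne⟩
  refine strictAntiOn_of_deriv_neg (convex_Ico 0 (1 - c)) (fun t ht => ?_) (fun t ht => ?_)
  · obtain ⟨d, -, hd⟩ := hneg_deriv t ht
    exact hd.continuousAt.continuousWithinAt
  · obtain ⟨d, hneg, hd⟩ := hneg_deriv t (interior_subset ht)
    rwa [hd.deriv]

/-- Deviating from the symmetric flipping strategy `(p, p)` to `(p − ε, p)` strictly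
increases the level-`k` KL divergence: `D_k(ε)` is strictly increasing on `[0, p]`. -/
theorem stmt_5 (Pfa Pd α p β10' β01' : ℝ)
    (hPfa : 0 < Pfa) (hPfaPd : Pfa < Pd) (hPd : Pd < 1)
    (hα : α ∈ Set.Ioc (0 : ℝ) 1) (hp : p ∈ Set.Ioc (0 : ℝ) 1)
    (hβ10' : 0 ≤ β10') (hβ01' : 0 ≤ β01')
    (h10 : β10' + α * p < 1 / 2) (h01 : β01' + α * p < 1 / 2) :
    StrictMonoOn
      (fun ε : ℝ =>
        klBern (piProb (β10' + α * (p - ε)) (β01' + α * p) Pfa)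
               (piProb (β10' + α * (p - ε)) (β01' + α * p) Pd))
      (Set.Icc 0 p) := by
  have hα0 : 0 < α := hα.1
  have hp0 : 0 < p := hp.1
  have hflip : StrictAntiOn (fun ε : ℝ => β10' + α * (p - ε)) (Set.Icc 0 p) :=
    fun x _ y _ hxy => by simp only; nlinarith
  have hmaps : Set.MapsTo (fun ε : ℝ => β10' + α * (p - ε)) (Set.Icc 0 p)
      (Set.Ico 0 (1 - (β01' + α * p))) := by
    rintro ε ⟨hε0, hεp⟩
    constructor <;> nlinarith
  exact (strictAntiOn_klBern_piProb (by positivity) hPfa hPfaPd hPd).comp hflip hmaps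
end

section
/- Let 0 < P_fa < P_d ≤ 1 and 0 < π_{1,0} < π_{1,1} < 1 with P_d · π_{1,0} > P_fa · π_{1,1}. Then (1−π_{1,0})/(1−π_{1,1}) + (P_fa/P_d)·log(π_{1,0}/π_{1,1}) > π_{1,0}/π_{1,1} + (P_fa/P_d)·log((1−π_{1,0})/(1−π_{1,1})). -/
/-! With `a = π₁₀/π₁₁ < 1 < b = (1-π₁₀)/(1-π₁₁)` and `c = P_fa/P_d`, the cross condition says
`c < a`, and the claim is `c · log (b/a) < b - a`. This follows from `log x ≤ x - 1` at `x = b/a`: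
`c · log (b/a) < a · log (b/a) ≤ a (b/a - 1) = b - a`. -/

theorem mul_log_div_lt_sub {a b c : ℝ} (ha : 0 < a) (hab : a < b) (hca : c < a) :
    c * Real.log (b / a) < b - a := by
  have hlog : 0 < Real.log (b / a) := Real.log_pos ((one_lt_div ha).2 hab)
  calc c * Real.log (b / a) < a * Real.log (b / a) := mul_lt_mul_of_pos_right hca hlog
    _ ≤ a * (b / a - 1) :=
        mul_le_mul_of_nonneg_left (Real.log_le_sub_one_of_pos (div_pos (ha.trans hab) ha)) ha.le
    _ = b - a := by field_simp

theorem stmt_6_general (Pfa Pd π10 π11 : ℝ)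
    (hPfa : 0 < Pfa)
    (hπ10 : 0 < π10) (hπ : π10 < π11) (hπ11 : π11 < 1)
    (hcross : Pd * π10 > Pfa * π11) :
    (1 - π10) / (1 - π11) + (Pfa / Pd) * Real.log (π10 / π11) >
      π10 / π11 + (Pfa / Pd) * Real.log ((1 - π10) / (1 - π11)) := by
  have hπ11₀ : 0 < π11 := hπ10.trans hπ
  have hPd : 0 < Pd := pos_of_mul_pos_left ((mul_pos hPfa hπ11₀).trans hcross) hπ10.le
  have ha : 0 < π10 / π11 := div_pos hπ10 hπ11₀
  have hab : π10 / π11 < (1 - π10) / (1 - π11) :=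
    ((div_lt_one hπ11₀).2 hπ).trans ((one_lt_div (by linarith)).2 (by linarith))
  have hca : Pfa / Pd < π10 / π11 := (div_lt_div_iff₀ hPd hπ11₀).2 (by linarith)
  have key := mul_log_div_lt_sub ha hab hca
  rw [Real.log_div (ha.trans hab).ne' ha.ne'] at key
  linarith

/-- Sign condition on `dD_k/dε > 0` for deviations `(p, p − ε)`:
`(1−π₁₀)/(1−π₁₁) + (P_fa/P_d)·log(π₁₀/π₁₁) > π₁₀/π₁₁ + (P_fa/P_d)·log((1−π₁₀)/(1−π₁₁))`. -/
theorem stmt_6 (Pfa Pd π10 π11 : ℝ)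
    (hPfa : 0 < Pfa) (hPfaPd : Pfa < Pd) (hPd : Pd ≤ 1)
    (hπ10 : 0 < π10) (hπ : π10 < π11) (hπ11 : π11 < 1)
    (hcross : Pd * π10 > Pfa * π11) :
    (1 - π10) / (1 - π11) + (Pfa / Pd) * Real.log (π10 / π11) >
      π10 / π11 + (Pfa / Pd) * Real.log ((1 - π10) / (1 - π11)) :=
  stmt_6_general Pfa Pd π10 π11 hPfa hπ10 hπ hπ11 hcross
end

section
/- Let 0 ≤ P_fa < P_d < 1 and 0 < π_{1,0} < π_{1,1} < 1 with (1−P_d)(1−π_{1,0}) < (1−P_fa)(1−π_{1,1}). Then π_{1,0}/π_{1,1} + ((1−P_fa)/(1−P_d))·log((1−π_{1,0})/(1−π_{1,1})) > (1−π_{1,0})/(1−π_{1,1}) + ((1−P_fa)/(1−P_d))·log(π_{1,0}/π_{1,1}). -/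
/-!
With `a = π₁₀/π₁₁`, `b = (1-π₁₀)/(1-π₁₁)` and `r = (1-P_fa)/(1-P_d)` the claim reads
`b - a < r · log (b/a)`. Here `a < 1 < b`, and the cross condition is exactly `b < r`, so it
follows from `log x ≥ 1 - 1/x` at `x = b/a`: `b - a ≤ b · log (b/a) < r · log (b/a)`.
-/

open Real

lemma sub_lt_mul_log_div_s7 {a b r : ℝ} (ha : 0 < a) (hab : a < b) (hbr : b < r) :
    b - a < r * log (b / a) := by
  have hb : 0 < b := ha.trans hab
  have hlog : 0 < log (b / a) := log_pos ((one_lt_div ha).mpr hab)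
  calc b - a = b * (1 - (b / a)⁻¹) := by field_simp
    _ ≤ b * log (b / a) := mul_le_mul_of_nonneg_left (one_sub_inv_le_log_of_pos (by positivity)) hb.le
    _ < r * log (b / a) := mul_lt_mul_of_pos_right hbr hlog

lemma div_lt_one_sub_div_one_sub {p q : ℝ} (hp : 0 < p) (hpq : p < q) (hq : q < 1) :
    p / q < (1 - p) / (1 - q) := by
  rw [div_lt_div_iff₀ (hp.trans hpq) (by linarith)]
  nlinarith

theorem stmt_7_general (Pfa Pd π10 π11 : ℝ)
    (hPd : Pd < 1)
    (hπ10 : 0 < π10) (hπ : π10 < π11) (hπ11 : π11 < 1)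
    (hcross : (1 - Pd) * (1 - π10) < (1 - Pfa) * (1 - π11)) :
    π10 / π11 + ((1 - Pfa) / (1 - Pd)) * Real.log ((1 - π10) / (1 - π11)) >
      (1 - π10) / (1 - π11) + ((1 - Pfa) / (1 - Pd)) * Real.log (π10 / π11) := by
  have ha : 0 < π10 / π11 := div_pos hπ10 (hπ10.trans hπ)
  have hab := div_lt_one_sub_div_one_sub hπ10 hπ hπ11
  have hbr : (1 - π10) / (1 - π11) < (1 - Pfa) / (1 - Pd) := by
    rw [div_lt_div_iff₀ (by linarith) (by linarith)]
    linarith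
  have key := sub_lt_mul_log_div_s7 ha hab hbr
  rw [log_div (ha.trans hab).ne' ha.ne'] at key
  linarith

/-- Sign condition on `dD_k/dε > 0` for deviations `(p − ε, p)`:
`π₁₀/π₁₁ + ((1−P_fa)/(1−P_d))·log((1−π₁₀)/(1−π₁₁)) >
 (1−π₁₀)/(1−π₁₁) + ((1−P_fa)/(1−P_d))·log(π₁₀/π₁₁)`. -/
theorem stmt_7 (Pfa Pd π10 π11 : ℝ)
    (hPfa : 0 ≤ Pfa) (hPfaPd : Pfa < Pd) (hPd : Pd < 1)
    (hπ10 : 0 < π10) (hπ : π10 < π11) (hπ11 : π11 < 1)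
    (hcross : (1 - Pd) * (1 - π10) < (1 - Pfa) * (1 - π11)) :
    π10 / π11 + ((1 - Pfa) / (1 - Pd)) * Real.log ((1 - π10) / (1 - π11)) >
      (1 - π10) / (1 - π11) + ((1 - Pfa) / (1 - Pd)) * Real.log (π10 / π11) :=
  stmt_7_general Pfa Pd π10 π11 hPd hπ10 hπ hπ11 hcross
end

section
/- Let 0 < P_fa < 1/2, P_fa < P_d < 1, α ∈ (0,1], and β'_{1,0}, β'_{0,1} ≥ 0 with β'_{1,0} + α < 1/2 and β'_{0,1} + α < 1/2. For p ∈ [0,1] set π_{1,1}(p) = (β'_{1,0}+αp)(1−P_d) + (1−β'_{0,1}−αp)P_d and π_{1,0}(p) = (β'_{1,0}+αp)(1−P_fa) + (1−β'_{0,1}−αp)P_fa. Then D_k(p) = π_{1,0}(p) log(π_{1,0}(p)/π_{1,1}(p)) + (1−π_{1,0}(p)) log((1−π_{1,0}(p))/(1−π_{1,1}(p))) is strictly decreasing in p on [0,1]; consequently, in the region where the attacker cannot make D_k = 0, the optimal attacking strategy is the symmetric strategy with (P_{0,1}^k, P_{1,0}^k) = (1,1). -/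
open Real

lemma hasDerivAt_klBern {A B : ℝ → ℝ} {a' b' p : ℝ}
    (hA : HasDerivAt A a' p) (hB : HasDerivAt B b' p)
    (hA0 : A p ≠ 0) (hA1 : 1 - A p ≠ 0) (hB0 : B p ≠ 0) (hB1 : 1 - B p ≠ 0) :
    HasDerivAt (fun q => klBern (A q) (B q))
      (a' * (log (A p / B p) - log ((1 - A p) / (1 - B p))) +
        b' * ((B p - A p) / (B p * (1 - B p)))) p := by
  have hA' : HasDerivAt (fun q => 1 - A q) (-a') p := hA.const_sub 1
  have hB' : HasDerivAt (fun q => 1 - B q) (-b') p := hB.const_sub 1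
  have h := (hA.mul ((hA.div hB hB0).log (div_ne_zero hA0 hB0))).add
    (hA'.mul ((hA'.div hB' hB1).log (div_ne_zero hA1 hB1)))
  refine h.congr_deriv ?_
  simp only [Pi.div_apply]
  field_simp
  ring

lemma log_div_sub_log_div_lt {a b : ℝ} (ha : 0 < a) (hab : a < b) (hb : b < 1) :
    log (a / b) - log ((1 - a) / (1 - b)) < (a - b) / (b * (1 - a)) := by
  have hb0 : 0 < b := ha.trans hab
  have ha1 : 0 < 1 - a := by linarith
  have hb1 : 0 < 1 - b := by linarith
  have hx : a * (1 - b) / (b * (1 - a)) ≠ 1 := by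
    rw [Ne, div_eq_one_iff_eq (by positivity)]
    nlinarith
  calc log (a / b) - log ((1 - a) / (1 - b))
      = log (a * (1 - b) / (b * (1 - a))) := by
        rw [← log_div (by positivity) (by positivity)]
        congr 1
        field_simp
    _ < a * (1 - b) / (b * (1 - a)) - 1 := log_lt_sub_one_of_pos (by positivity) hx
    _ = (a - b) / (b * (1 - a)) := by field_simp; ring

lemma klBern_deriv_neg {a b a' b' : ℝ} (ha : 0 < a) (hab : a < b) (hb : b < 1)
    (ha' : 0 < a') (hslope : b' * (1 - a) ≤ a' * (1 - b)) :
    a' * (log (a / b) - log ((1 - a) / (1 - b))) + b' * ((b - a) / (b * (1 - b))) < 0 := by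
  have hb0 : 0 < b := ha.trans hab
  have ha1 : 0 < 1 - a := by linarith
  have hb1 : 0 < 1 - b := by linarith
  have hlog := mul_lt_mul_of_pos_left (log_div_sub_log_div_lt ha hab hb) ha'
  have hrest : a' * ((a - b) / (b * (1 - a))) + b' * ((b - a) / (b * (1 - b))) ≤ 0 := by
    have heq : a' * ((a - b) / (b * (1 - a))) + b' * ((b - a) / (b * (1 - b))) =
        (b - a) * (b' * (1 - a) - a' * (1 - b)) / (b * (1 - a) * (1 - b)) := by
      field_simp
      ring
    rw [heq]
    exact div_nonpos_of_nonpos_of_nonneg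
      (mul_nonpos_of_nonneg_of_nonpos (by linarith) (by linarith)) (by positivity)
  linarith

lemma strictAntiOn_klBern {D : Set ℝ} (hD : Convex ℝ D) {A B A' B' : ℝ → ℝ}
    (hA : ∀ p ∈ D, HasDerivAt A (A' p) p) (hB : ∀ p ∈ D, HasDerivAt B (B' p) p)
    (hA' : ∀ p ∈ D, 0 < A' p)
    (hAB : ∀ p ∈ D, 0 < A p ∧ A p < B p ∧ B p < 1)
    (hslope : ∀ p ∈ D, B' p * (1 - A p) ≤ A' p * (1 - B p)) :
    StrictAntiOn (fun p => klBern (A p) (B p)) D := by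
  have hderiv : ∀ p ∈ D, HasDerivAt (fun q => klBern (A q) (B q))
      (A' p * (log (A p / B p) - log ((1 - A p) / (1 - B p))) +
        B' p * ((B p - A p) / (B p * (1 - B p)))) p := by
    intro p hp
    obtain ⟨ha, hab, hb⟩ := hAB p hp
    exact hasDerivAt_klBern (hA p hp) (hB p hp) ha.ne' (by linarith) (ha.trans hab).ne'
      (by linarith)
  refine strictAntiOn_of_hasDerivWithinAt_neg hD
    (fun p hp => (hderiv p hp).continuousAt.continuousWithinAt)
    (fun p hp => (hderiv p (interior_subset hp)).hasDerivWithinAt) fun p hp => ?_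
  obtain ⟨ha, hab, hb⟩ := hAB p (interior_subset hp)
  exact klBern_deriv_neg ha hab hb (hA' p (interior_subset hp))
    (hslope p (interior_subset hp))

lemma piProb_add_add (β10 β01 c P : ℝ) :
    piProb (β10 + c) (β01 + c) P = piProb β10 β01 P + c * (1 - 2 * P) := by
  unfold piProb
  ring

lemma hasDerivAt_piProb_add_mul (β10 β01 α P p : ℝ) :
    HasDerivAt (fun q => piProb (β10 + α * q) (β01 + α * q) P) (α * (1 - 2 * P)) p := by
  simp only [piProb_add_add]
  exact ((((hasDerivAt_id' p).const_mul α).mul_const (1 - 2 * P)).const_add _).congr_deriv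
    (by ring)

lemma piProb_bounds {β10 β01 Pfa Pd : ℝ} (hβ10 : 0 ≤ β10) (hβ01 : 0 ≤ β01)
    (hβ : β10 + β01 < 1) (hPfa : 0 < Pfa) (hPfaPd : Pfa < Pd) (hPd : Pd < 1) :
    0 < piProb β10 β01 Pfa ∧ piProb β10 β01 Pfa < piProb β10 β01 Pd ∧
      piProb β10 β01 Pd < 1 := by
  have hm : 0 < 1 - β10 - β01 := by linarith
  have hform : ∀ P, piProb β10 β01 P = β10 + P * (1 - β10 - β01) := fun P => by
    unfold piProb; ring
  simp only [hform]
  refine ⟨by positivity, by nlinarith, by nlinarith⟩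

lemma piProb_slope_identity (β10 β01 Pfa Pd : ℝ) :
    (1 - 2 * Pfa) * (1 - piProb β10 β01 Pd) - (1 - 2 * Pd) * (1 - piProb β10 β01 Pfa) =
      (Pd - Pfa) * (1 - β10 + β01) := by
  unfold piProb
  ring

/-- Under symmetric flipping probabilities `P₁₀ᵏ = P₀₁ᵏ = p`, the level-`k` KL
divergence `D_k(p)` is strictly decreasing in `p` on `[0,1]`; consequently, in the
region where the attacker cannot make `D_k = 0`, the optimal attacking strategy is
`(P₀₁ᵏ, P₁₀ᵏ) = (1,1)`. -/
theorem stmt_9 (Pfa Pd α β10' β01' : ℝ)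
    (hPfa : 0 < Pfa) (hPfa2 : Pfa < 1 / 2) (hPfaPd : Pfa < Pd) (hPd : Pd < 1)
    (hα : α ∈ Set.Ioc (0 : ℝ) 1)
    (hβ10' : 0 ≤ β10') (hβ01' : 0 ≤ β01')
    (h10 : β10' + α < 1 / 2) (h01 : β01' + α < 1 / 2) :
    StrictAntiOn
      (fun p : ℝ =>
        klBern (piProb (β10' + α * p) (β01' + α * p) Pfa)
               (piProb (β10' + α * p) (β01' + α * p) Pd))
      (Set.Icc 0 1) ∧
    ∀ p ∈ Set.Icc (0 : ℝ) 1,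
      klBern (piProb (β10' + α * 1) (β01' + α * 1) Pfa)
             (piProb (β10' + α * 1) (β01' + α * 1) Pd) ≤
        klBern (piProb (β10' + α * p) (β01' + α * p) Pfa)
               (piProb (β10' + α * p) (β01' + α * p) Pd) := by
  obtain ⟨hα0, -⟩ := hα
  have hanti : StrictAntiOn (fun p : ℝ =>
      klBern (piProb (β10' + α * p) (β01' + α * p) Pfa)
             (piProb (β10' + α * p) (β01' + α * p) Pd)) (Set.Icc 0 1) := by
    refine strictAntiOn_klBern (convex_Icc 0 1)
      (fun p _ => hasDerivAt_piProb_add_mul β10' β01' α Pfa p)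
      (fun p _ => hasDerivAt_piProb_add_mul β10' β01' α Pd p)
      (fun _ _ => mul_pos hα0 (by linarith)) (fun p hp => ?_) (fun p _ => ?_)
    · have hαp : α * p ≤ α := mul_le_of_le_one_right hα0.le hp.2
      have hαp0 : 0 ≤ α * p := mul_nonneg hα0.le hp.1
      exact piProb_bounds (by linarith) (by linarith) (by linarith) hPfa hPfaPd hPd
    · have h := piProb_slope_identity (β10' + α * p) (β01' + α * p) Pfa Pd
      nlinarith [mul_pos hα0 (mul_pos (sub_pos.2 hPfaPd) (by linarith : 0 < 1 - β10' + β01'))]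
  exact ⟨hanti, fun p hp => hanti.antitoneOn hp ⟨zero_le_one, le_rfl⟩ hp.2⟩
end

section
/- Let 0 < P_fa < 1/2, P_fa < P_d < 1, and 0 < π_{1,0} < π_{1,1} < 1 with (1−P_d)(1−π_{1,0}) < (1−P_fa)(1−π_{1,1}). Then (1−2P_d)·((1−π_{1,0})/(1−π_{1,1}) − π_{1,0}/π_{1,1}) + (1−2P_fa)·log( ((1−π_{1,1})·π_{1,0}) / ((1−π_{1,0})·π_{1,1}) ) < 0. -/
/-! With `a = (1-π₁₀)/(1-π₁₁) > 1` and `b = π₁₀/π₁₁ < 1` the logarithm is `log b - log a`.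
The tangent-line bounds `log b < b - 1` and `-log a ≤ a⁻¹ - 1` turn the expression into a
rational function of `a, b`, which is increasing in `b`; at `b = 1` it equals
`(a-1)/a · (2(a(1-P_d) - (1-P_fa)) + (1-a))`, negative by the cross condition. -/

open Real

lemma log_sub_log_lt_add_inv_sub_two {a b : ℝ} (ha : 0 < a) (hb : 0 < b) (hb1 : b ≠ 1) :
    log b - log a < b + a⁻¹ - 2 := by
  have hlog_b : log b < b - 1 := log_lt_sub_one_of_pos hb hb1
  have hlog_inv_a : log a⁻¹ ≤ a⁻¹ - 1 := log_le_sub_one_of_pos (inv_pos.2 ha)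
  rw [log_inv] at hlog_inv_a
  linarith

lemma mul_sub_add_mul_add_inv_sub_two_neg {Pfa Pd a b : ℝ} (hPfaPd : Pfa < Pd)
    (ha : 1 < a) (hb1 : b < 1) (hcross : a * (1 - Pd) < 1 - Pfa) :
    (1 - 2 * Pd) * (a - b) + (1 - 2 * Pfa) * (b + a⁻¹ - 2) < 0 := by
  have ha0 : a ≠ 0 := by positivity
  have hsplit : (1 - 2 * Pd) * (a - b) + (1 - 2 * Pfa) * (b + a⁻¹ - 2) =
      2 * (Pd - Pfa) * (b - 1) + (a - 1) / a * (2 * (a * (1 - Pd) - (1 - Pfa)) + (1 - a)) := by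
    field_simp
    ring
  have hslope : 2 * (Pd - Pfa) * (b - 1) < 0 :=
    mul_neg_of_pos_of_neg (by linarith) (by linarith)
  have hat_one : (a - 1) / a * (2 * (a * (1 - Pd) - (1 - Pfa)) + (1 - a)) < 0 :=
    mul_neg_of_pos_of_neg (div_pos (by linarith) (by linarith)) (by linarith)
  linarith

theorem stmt_10_general (Pfa Pd π10 π11 : ℝ)
    (hPfa2 : Pfa < 1 / 2) (hPfaPd : Pfa < Pd)
    (hπ10 : 0 < π10) (hπ : π10 < π11) (hπ11 : π11 < 1)
    (hcross : (1 - Pd) * (1 - π10) < (1 - Pfa) * (1 - π11)) :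
    (1 - 2 * Pd) * ((1 - π10) / (1 - π11) - π10 / π11) +
      (1 - 2 * Pfa) * Real.log (((1 - π11) * π10) / ((1 - π10) * π11)) < 0 := by
  have hπ11_pos : 0 < π11 := hπ10.trans hπ
  have hcompl_pos : 0 < 1 - π11 := by linarith
  set a := (1 - π10) / (1 - π11)
  set b := π10 / π11
  have ha : 1 < a := (one_lt_div hcompl_pos).2 (by linarith)
  have hb : 0 < b := div_pos hπ10 hπ11_pos
  have hb1 : b < 1 := (div_lt_one hπ11_pos).2 hπ
  have hlog : log (((1 - π11) * π10) / ((1 - π10) * π11)) = log b - log a := by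
    rw [← log_div hb.ne' (by positivity), div_div_div_eq]
    ring_nf
  have hcross' : a * (1 - Pd) < 1 - Pfa := by
    rw [div_mul_eq_mul_div, div_lt_iff₀ hcompl_pos]
    linarith
  have hweight : 0 < 1 - 2 * Pfa := by linarith
  rw [hlog]
  calc (1 - 2 * Pd) * (a - b) + (1 - 2 * Pfa) * (log b - log a)
      < (1 - 2 * Pd) * (a - b) + (1 - 2 * Pfa) * (b + a⁻¹ - 2) :=
        add_lt_add_right (mul_lt_mul_of_pos_left
          (log_sub_log_lt_add_inv_sub_two (zero_lt_one.trans ha) hb hb1.ne) hweight) _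
    _ < 0 := mul_sub_add_mul_add_inv_sub_two_neg hPfaPd ha hb1 hcross'

/-- Sign condition `dD_k/dp < 0` for symmetric flipping probabilities:
`(1−2P_d)·((1−π₁₀)/(1−π₁₁) − π₁₀/π₁₁) + (1−2P_fa)·log(((1−π₁₁)π₁₀)/((1−π₁₀)π₁₁)) < 0`. -/
theorem stmt_10 (Pfa Pd π10 π11 : ℝ)
    (hPfa : 0 < Pfa) (hPfa2 : Pfa < 1 / 2) (hPfaPd : Pfa < Pd) (hPd : Pd < 1)
    (hπ10 : 0 < π10) (hπ : π10 < π11) (hπ11 : π11 < 1)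
    (hcross : (1 - Pd) * (1 - π10) < (1 - Pfa) * (1 - π11)) :
    (1 - 2 * Pd) * ((1 - π10) / (1 - π11) - π10 / π11) +
      (1 - 2 * Pfa) * Real.log (((1 - π11) * π10) / ((1 - π10) * π11)) < 0 :=
  stmt_10_general Pfa Pd π10 π11 hPfa2 hPfaPd hπ10 hπ hπ11 hcross
end

section
/- Let 0 < P_fa < P_d < 1 and for t ∈ [0,1/2) define π_0(t) = P_fa + t(1−2P_fa), π_1(t) = P_d + t(1−2P_d), and D*(t) = π_0(t) log(π_0(t)/π_1(t)) + (1−π_0(t)) log((1−π_0(t))/(1−π_1(t))). Then D* is continuous, strictly decreasing, and convex on [0,1/2), and D*(t) → 0 as t → 1/2. -/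
open Filter

/-!
`D*` is the Bernoulli KL divergence along the segment from `(P_fa, P_d)` to its reflection
`(1 - P_fa, 1 - P_d)`, which crosses the diagonal at `(1/2, 1/2)` when `t = 1/2`. Writing
`klBern a b = b φ(a/b) + (1-b) φ((1-a)/(1-b))` with `φ = klFun` convex exhibits `klBern` as a sum
of perspectives of a convex function, hence jointly convex (and so continuous) on the open unit
square. Thus `D*` is convex on `[0, 1]`, vanishes at `1/2` and is positive on `[0, 1/2)`; a convex
function lying strictly above its value at `1/2` to the left of `1/2` is strictly decreasing there.
-/

open Set InformationTheory

theorem ConvexOn.perspective {f : ℝ → ℝ} (hf : ConvexOn ℝ (Ici 0) f) :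
    ConvexOn ℝ (Ici 0 ×ˢ Ioi 0) fun p : ℝ × ℝ => p.2 * f (p.1 / p.2) := by
  refine ⟨(convex_Ici 0).prod (convex_Ioi 0), ?_⟩
  rintro ⟨x₁, y₁⟩ ⟨hx₁, hy₁⟩ ⟨x₂, y₂⟩ ⟨hx₂, hy₂⟩ a b ha hb hab
  simp only [mem_Ici, mem_Ioi] at hx₁ hy₁ hx₂ hy₂
  simp only [Prod.smul_mk, Prod.mk_add_mk, smul_eq_mul]
  set y := a * y₁ + b * y₂
  have hy : 0 < y := convex_Ioi (0 : ℝ) hy₁ hy₂ ha hb hab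
  -- Jensen for the weights `a y₁ / y` and `b y₂ / y` at the points `x₁ / y₁`, `x₂ / y₂`.
  have key := hf.2 (mem_Ici.2 (div_nonneg hx₁ hy₁.le)) (mem_Ici.2 (div_nonneg hx₂ hy₂.le))
    (div_nonneg (mul_nonneg ha hy₁.le) hy.le) (div_nonneg (mul_nonneg hb hy₂.le) hy.le)
    (by rw [← add_div, div_self hy.ne'])
  have hmean : a * y₁ / y * (x₁ / y₁) + b * y₂ / y * (x₂ / y₂) = (a * x₁ + b * x₂) / y := by
    field_simp
  simp only [smul_eq_mul, hmean] at key
  calc y * f ((a * x₁ + b * x₂) / y)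
      ≤ y * (a * y₁ / y * f (x₁ / y₁) + b * y₂ / y * f (x₂ / y₂)) := by gcongr
    _ = a * (y₁ * f (x₁ / y₁)) + b * (y₂ * f (x₂ / y₂)) := by field_simp

lemma klBern_eq_klFun {a b : ℝ} (hb₀ : b ≠ 0) (hb₁ : b ≠ 1) :
    klBern a b = b * klFun (a / b) + (1 - b) * klFun ((1 - a) / (1 - b)) := by
  have : 1 - b ≠ 0 := sub_ne_zero.2 hb₁.symm
  simp only [klBern, klFun_apply]
  field_simp
  ring

lemma klBern_self (a : ℝ) : klBern a a = 0 := by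
  simp [klBern]

lemma klBern_pos {a b : ℝ} (ha₀ : 0 ≤ a) (ha₁ : a ≤ 1) (hb₀ : 0 < b) (hb₁ : b < 1)
    (hab : a ≠ b) : 0 < klBern a b := by
  rw [klBern_eq_klFun hb₀.ne' hb₁.ne]
  have hfirst : 0 < klFun (a / b) :=
    (klFun_nonneg (by positivity)).lt_of_ne' fun h =>
      hab ((div_eq_one_iff_eq hb₀.ne').1 ((klFun_eq_zero_iff (by positivity)).1 h))
  have hsecond : 0 ≤ klFun ((1 - a) / (1 - b)) :=
    klFun_nonneg (div_nonneg (by linarith) (by linarith))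
  have : 0 < 1 - b := by linarith
  positivity

lemma convexOn_klBern : ConvexOn ℝ (Ioo 0 1 ×ˢ Ioo 0 1) fun p : ℝ × ℝ => klBern p.1 p.2 := by
  have hsq : Convex ℝ (Ioo (0 : ℝ) 1 ×ˢ Ioo (0 : ℝ) 1) := (convex_Ioo 0 1).prod (convex_Ioo 0 1)
  have hfirst := convexOn_klFun.perspective.subset
    (prod_mono (Ioo_subset_Icc_self.trans Icc_subset_Ici_self) Ioo_subset_Ioi_self) hsq
  have hsecond := (convexOn_klFun.perspective.comp_affineMap
    (AffineMap.const ℝ (ℝ × ℝ) (1, 1) - AffineMap.id ℝ (ℝ × ℝ))).subset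
    (fun p hp => ⟨sub_nonneg.2 hp.1.2.le, sub_pos.2 hp.2.2⟩) hsq
  refine (hfirst.add hsecond).congr fun p hp => ?_
  simpa using (klBern_eq_klFun hp.2.1.ne' hp.2.2.ne).symm

lemma continuousOn_klBern :
    ContinuousOn (fun p : ℝ × ℝ => klBern p.1 p.2) (Ioo 0 1 ×ˢ Ioo 0 1) :=
  convexOn_klBern.continuousOn (isOpen_Ioo.prod isOpen_Ioo)

lemma lineMap_one_sub_prod (p q t : ℝ) :
    AffineMap.lineMap (p, q) (1 - p, 1 - q) t = (p + t * (1 - 2 * p), q + t * (1 - 2 * q)) := by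
  rw [AffineMap.lineMap_apply_module']
  ext <;> simp <;> ring

lemma ConvexOn.strictAntiOn_Iio_of_lt {f : ℝ → ℝ} {s : Set ℝ} {m : ℝ} (hf : ConvexOn ℝ s f)
    (hm : m ∈ s) (h : ∀ x ∈ s, x < m → f m < f x) : StrictAntiOn f (s ∩ Iio m) :=
  fun _ ha _ hb hab =>
    hf.strictAntiOn hm hb.2 (h _ hb.1 hb.2) ⟨ha.1, hab.le⟩ ⟨hb.1, self_mem_Iic⟩ hab

/-- The minimum KL divergence `D*(t) = klBern (P_fa + t(1−2P_fa)) (P_d + t(1−2P_d))`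
is continuous, strictly decreasing and convex on `[0, 1/2)`, and tends to `0`
as `t → 1/2`. -/
theorem stmt_11 (Pfa Pd : ℝ)
    (hPfa : 0 < Pfa) (hPfaPd : Pfa < Pd) (hPd : Pd < 1) :
    ContinuousOn
      (fun t : ℝ => klBern (Pfa + t * (1 - 2 * Pfa)) (Pd + t * (1 - 2 * Pd)))
      (Set.Ico 0 (1 / 2)) ∧
    StrictAntiOn
      (fun t : ℝ => klBern (Pfa + t * (1 - 2 * Pfa)) (Pd + t * (1 - 2 * Pd)))
      (Set.Ico 0 (1 / 2)) ∧
    ConvexOn ℝ (Set.Ico (0 : ℝ) (1 / 2))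
      (fun t : ℝ => klBern (Pfa + t * (1 - 2 * Pfa)) (Pd + t * (1 - 2 * Pd))) ∧
    Tendsto (fun t : ℝ => klBern (Pfa + t * (1 - 2 * Pfa)) (Pd + t * (1 - 2 * Pd)))
      (nhdsWithin (1 / 2) (Set.Ico 0 (1 / 2))) (nhds 0) := by
  set D := fun t : ℝ => klBern (Pfa + t * (1 - 2 * Pfa)) (Pd + t * (1 - 2 * Pd))
  have hD : D = (fun p : ℝ × ℝ => klBern p.1 p.2) ∘ AffineMap.lineMap (Pfa, Pd) (1 - Pfa, 1 - Pd) :=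
    funext fun t => by simp [D, lineMap_one_sub_prod]
  have hseg : MapsTo (AffineMap.lineMap (Pfa, Pd) (1 - Pfa, 1 - Pd)) (Icc (0 : ℝ) 1)
      (Ioo 0 1 ×ˢ Ioo 0 1) :=
    ((convex_Ioo 0 1).prod (convex_Ioo 0 1)).mapsTo_lineMap
      ⟨⟨hPfa, by linarith⟩, ⟨by linarith, hPd⟩⟩ ⟨⟨by linarith, by linarith⟩, ⟨by linarith, by linarith⟩⟩
  have hconv : ConvexOn ℝ (Icc 0 1) D :=
    hD ▸ (convexOn_klBern.comp_affineMap _).subset hseg (convex_Icc 0 1)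
  have hcont : ContinuousOn D (Icc 0 1) :=
    hD ▸ continuousOn_klBern.comp AffineMap.lineMap_continuous.continuousOn hseg
  have hhalf : D (1 / 2) = 0 := by
    simp only [D]; ring_nf; exact klBern_self _
  have hpos : ∀ t ∈ Icc (0 : ℝ) 1, t < 1 / 2 → D (1 / 2) < D t := by
    intro t ht hlt
    obtain ⟨⟨h₀, h₁⟩, ⟨h₂, h₃⟩⟩ := lineMap_one_sub_prod Pfa Pd t ▸ hseg ht
    rw [hhalf]
    exact klBern_pos h₀.le h₁.le h₂ h₃ (ne_of_lt (by nlinarith))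
  have hIco : Ico (0 : ℝ) (1 / 2) ⊆ Icc 0 1 ∩ Iio (1 / 2) :=
    fun t ht => ⟨⟨ht.1, by linarith [ht.2]⟩, ht.2⟩
  have hsub : Ico (0 : ℝ) (1 / 2) ⊆ Icc 0 1 := fun t ht => (hIco ht).1
  refine ⟨hcont.mono hsub, (hconv.strictAntiOn_Iio_of_lt (by norm_num) hpos).mono hIco,
    hconv.subset hsub (convex_Ico 0 (1 / 2)), ?_⟩
  simpa only [hhalf] using ((hcont (1 / 2) (by norm_num)).mono hsub).tendsto
end

section
/- Let 0 < P_fa < P_d < 1 and let D*(t) be the Bernoulli Kullback–Leibler divergence between P_fa + t(1−2P_fa) and P_d + t(1−2P_d). Consider a K-level tree with N_k ≥ 1 nodes at level k, total KLD D(B) = Σ_{k=1}^K N_k · D*(t_k(B)) where t_k(B) = Σ_{i=1}^k B_i/N_i. Fix a level j < K, an integer δ with 1 ≤ δ ≤ B_j, and a real γ with 0 ≤ γ ≤ N_{j+1}/N_j, and let S_1 = (B_1,…,B_j,B_{j+1},…,B_K) and S_2 = (B_1,…,B_j−δ, B_{j+1}+δγ,…,B_K) (all other levels unchanged). If all partial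 sums t_k(S_1) and t_k(S_2) are less than 1/2, then D(S_1) < D(S_2); in particular, when γ = N_{j+1}/N_j the two configurations have t_k(S_1) = t_k(S_2) for all k ≠ j and t_j(S_1) > t_j(S_2), so D(S_1) < D(S_2). -/
open Finset

/-- Per-node level KL divergence under the optimal attack `(1,1)` as a function of the
covered fraction `t`. -/
noncomputable def Dstar (Pfa Pd t : ℝ) : ℝ :=
  klBern (Pfa + t * (1 - 2 * Pfa)) (Pd + t * (1 - 2 * Pd))

/-- Strict log-sum inequality for two terms. -/
lemma logsum_aux {x1 x2 y1 y2 : ℝ} (hx1 : 0 < x1) (hx2 : 0 < x2) (hy1 : 0 < y1)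
    (hy2 : 0 < y2) (hne : x1 / y1 ≠ x2 / y2) :
    (x1 + x2) * Real.log ((x1 + x2) / (y1 + y2)) <
      x1 * Real.log (x1 / y1) + x2 * Real.log (x2 / y2) := by
  have hY : 0 < y1 + y2 := by linarith
  have h := Real.strictConvexOn_mul_log.2 (Set.mem_Ici.2 (le_of_lt (div_pos hx1 hy1)))
    (Set.mem_Ici.2 (le_of_lt (div_pos hx2 hy2))) hne
    (div_pos hy1 hY) (div_pos hy2 hY) (by field_simp)
  simp only [smul_eq_mul] at h
  have e1 : y1 / (y1 + y2) * (x1 / y1) + y2 / (y1 + y2) * (x2 / y2) = (x1 + x2) / (y1 + y2) := by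
    field_simp
  rw [e1] at h
  have h2 := mul_lt_mul_of_pos_left h hY
  calc (x1 + x2) * Real.log ((x1 + x2) / (y1 + y2))
      = (y1 + y2) * ((x1 + x2) / (y1 + y2) * Real.log ((x1 + x2) / (y1 + y2))) := by
        field_simp
    _ < (y1 + y2) * (y1 / (y1 + y2) * (x1 / y1 * Real.log (x1 / y1)) +
        y2 / (y1 + y2) * (x2 / y2 * Real.log (x2 / y2))) := h2
    _ = x1 * Real.log (x1 / y1) + x2 * Real.log (x2 / y2) := by
        field_simp

/-- Passing both probabilities through a binary symmetric channel with crossover `s ∈ (0,1/2)`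
strictly decreases the Bernoulli KL divergence. -/
lemma klBern_contract {a b s : ℝ} (ha : 0 < a) (hab : a < b) (hb : b < 1)
    (hs0 : 0 < s) (hs : s < 1 / 2) :
    klBern (a + s * (1 - 2 * a)) (b + s * (1 - 2 * b)) < klBern a b := by
  have h1a : 0 < 1 - a := by linarith
  have h1b : 0 < 1 - b := by linarith
  have hrne : a / b ≠ (1 - a) / (1 - b) := by
    have h1 : a / b < 1 := (div_lt_one (by linarith)).2 hab
    have h2 : 1 < (1 - a) / (1 - b) := (one_lt_div h1b).2 (by linarith)
    linarith
  have L1 := logsum_aux (mul_pos (by linarith : (0:ℝ) < 1 - s) ha)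
      (mul_pos hs0 h1a) (mul_pos (by linarith : (0:ℝ) < 1 - s) (by linarith : (0:ℝ) < b))
      (mul_pos hs0 h1b) (by
        rw [mul_div_mul_left _ _ (by linarith : (1:ℝ) - s ≠ 0),
          mul_div_mul_left _ _ (ne_of_gt hs0)]
        exact hrne)
  rw [mul_div_mul_left _ _ (by linarith : (1:ℝ) - s ≠ 0),
    mul_div_mul_left _ _ (ne_of_gt hs0)] at L1
  have L2 := logsum_aux (mul_pos (by linarith : (0:ℝ) < 1 - s) h1a)
      (mul_pos hs0 ha) (mul_pos (by linarith : (0:ℝ) < 1 - s) h1b)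
      (mul_pos hs0 (by linarith : (0:ℝ) < b)) (by
        rw [mul_div_mul_left _ _ (by linarith : (1:ℝ) - s ≠ 0),
          mul_div_mul_left _ _ (ne_of_gt hs0)]
        exact hrne.symm)
  rw [mul_div_mul_left _ _ (by linarith : (1:ℝ) - s ≠ 0),
    mul_div_mul_left _ _ (ne_of_gt hs0)] at L2
  have e1 : (1 - s) * a + s * (1 - a) = a + s * (1 - 2 * a) := by ring
  have e2 : (1 - s) * b + s * (1 - b) = b + s * (1 - 2 * b) := by ring
  have e3 : (1 - s) * (1 - a) + s * a = 1 - (a + s * (1 - 2 * a)) := by ring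
  have e4 : (1 - s) * (1 - b) + s * b = 1 - (b + s * (1 - 2 * b)) := by ring
  rw [e1, e2] at L1
  rw [e3, e4] at L2
  unfold klBern
  nlinarith [L1, L2]

/-- `Dstar` is strictly decreasing on `[0, 1/2)`. -/
lemma Dstar_lt {Pfa Pd : ℝ} (hPfa : 0 < Pfa) (hPfaPd : Pfa < Pd) (hPd : Pd < 1)
    {s t : ℝ} (hs0 : 0 ≤ s) (hst : s < t) (ht : t < 1 / 2) :
    Dstar Pfa Pd t < Dstar Pfa Pd s := by
  have hs2 : s < 1 / 2 := lt_of_lt_of_le hst (le_of_lt ht)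
  set a := Pfa + s * (1 - 2 * Pfa) with hadef
  set b := Pd + s * (1 - 2 * Pd) with hbdef
  have ha : 0 < a := by nlinarith
  have hab : a < b := by nlinarith
  have hb : b < 1 := by nlinarith
  set σ := (t - s) / (1 - 2 * s) with hσdef
  have h12s : (0:ℝ) < 1 - 2 * s := by linarith
  have hσ0 : 0 < σ := div_pos (by linarith) h12s
  have hσ : σ < 1 / 2 := by
    rw [hσdef, div_lt_iff₀ h12s]; linarith
  have ea : Pfa + t * (1 - 2 * Pfa) = a + σ * (1 - 2 * a) := by
    rw [hadef, hσdef]; field_simp; ring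
  have eb : Pd + t * (1 - 2 * Pd) = b + σ * (1 - 2 * b) := by
    rw [hbdef, hσdef]; field_simp; ring
  unfold Dstar
  rw [ea, eb]
  exact klBern_contract ha hab hb hσ0 hσ

lemma Dstar_le {Pfa Pd : ℝ} (hPfa : 0 < Pfa) (hPfaPd : Pfa < Pd) (hPd : Pd < 1)
    {s t : ℝ} (hs0 : 0 ≤ s) (hst : s ≤ t) (ht : t < 1 / 2) :
    Dstar Pfa Pd t ≤ Dstar Pfa Pd s := by
  rcases eq_or_lt_of_le hst with h | h
  · rw [h]
  · exact le_of_lt (Dstar_lt hPfa hPfaPd hPd hs0 h ht)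

/-- Attacking parent nodes is a strictly dominant strategy: moving `δ ≥ 1` Byzantines
from level `j` down to level `j+1` (replacing them by `δγ` Byzantines there, with
`0 ≤ γ ≤ N_{j+1}/N_j`) strictly increases the total KL divergence, i.e.
`D(S₁) < D(S₂)`.  (Levels are indexed `0,…,K-1`.) -/
theorem stmt_14 (Pfa Pd : ℝ)
    (hPfa : 0 < Pfa) (hPfaPd : Pfa < Pd) (hPd : Pd < 1)
    (K : ℕ) (N : ℕ → ℕ) (hN : ∀ k < K, 1 ≤ N k)
    (B : ℕ → ℕ) (hB : ∀ k < K, B k ≤ N k)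
    (j : ℕ) (hj : j + 1 < K)
    (δ : ℕ) (hδ1 : 1 ≤ δ) (hδB : δ ≤ B j)
    (γ : ℝ) (hγ0 : 0 ≤ γ) (hγ : γ ≤ (N (j + 1) : ℝ) / (N j : ℝ))
    (S1 S2 : ℕ → ℝ)
    (hS1 : S1 = fun i => (B i : ℝ))
    (hS2 : S2 = Function.update
      (Function.update (fun i => (B i : ℝ)) j ((B j : ℝ) - (δ : ℝ)))
      (j + 1) ((B (j + 1) : ℝ) + (δ : ℝ) * γ))
    (ht1 : ∀ k < K, ∑ i ∈ range (k + 1), S1 i / (N i : ℝ) < 1 / 2)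
    (ht2 : ∀ k < K, ∑ i ∈ range (k + 1), S2 i / (N i : ℝ) < 1 / 2) :
    ∑ k ∈ range K, (N k : ℝ) *
        Dstar Pfa Pd (∑ i ∈ range (k + 1), S1 i / (N i : ℝ)) <
      ∑ k ∈ range K, (N k : ℝ) *
        Dstar Pfa Pd (∑ i ∈ range (k + 1), S2 i / (N i : ℝ)) := by
  have hNj : (0:ℝ) < N j := by exact_mod_cast hN j (by omega)
  have hNj1 : (0:ℝ) < N (j + 1) := by exact_mod_cast hN (j + 1) hj
  have hδ0 : (0:ℝ) ≤ (δ : ℝ) := Nat.cast_nonneg δ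
  have hδpos : (0:ℝ) < (δ : ℝ) := by exact_mod_cast hδ1
  have hjne : j ≠ j + 1 := by omega
  -- pointwise description of S2
  have hpt : ∀ i : ℕ, S2 i / (N i : ℝ) = S1 i / (N i : ℝ) +
      ((if j = i then -((δ:ℝ) / (N j : ℝ)) else 0) +
       (if j + 1 = i then (δ:ℝ) * γ / (N (j + 1) : ℝ) else 0)) := by
    intro i
    rcases eq_or_ne (j + 1) i with h | h
    · rw [hS2, hS1, ← h, Function.update_self, if_pos rfl, if_neg hjne]
      ring
    · rcases eq_or_ne j i with h2 | h2
      · rw [hS2, hS1, ← h2, Function.update_of_ne hjne, Function.update_self,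
          if_pos rfl, if_neg (show j + 1 ≠ j by omega)]
        ring
      · rw [hS2, hS1, Function.update_of_ne (Ne.symm h), Function.update_of_ne (Ne.symm h2),
          if_neg h2, if_neg h]
        ring
  -- sum description
  have hsum : ∀ k : ℕ, ∑ i ∈ range (k + 1), S2 i / (N i : ℝ) =
      (∑ i ∈ range (k + 1), S1 i / (N i : ℝ)) +
      ((if j ∈ range (k + 1) then -((δ:ℝ) / (N j : ℝ)) else 0) +
       (if j + 1 ∈ range (k + 1) then (δ:ℝ) * γ / (N (j + 1) : ℝ) else 0)) := by
    intro k
    simp only [hpt]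
    rw [Finset.sum_add_distrib, Finset.sum_add_distrib, Finset.sum_ite_eq, Finset.sum_ite_eq]
  -- S2 sums are nonnegative
  have hnn : ∀ k : ℕ, 0 ≤ ∑ i ∈ range (k + 1), S2 i / (N i : ℝ) := by
    intro k
    apply Finset.sum_nonneg
    intro i _
    apply div_nonneg _ (Nat.cast_nonneg _)
    rcases eq_or_ne (j + 1) i with h | h
    · rw [hS2, ← h, Function.update_self]
      exact add_nonneg (Nat.cast_nonneg _) (mul_nonneg hδ0 hγ0)
    · rcases eq_or_ne j i with h2 | h2
      · rw [hS2, ← h2, Function.update_of_ne hjne, Function.update_self]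
        have hc : (δ:ℝ) ≤ (B j : ℝ) := by exact_mod_cast hδB
        linarith
      · rw [hS2, Function.update_of_ne (Ne.symm h), Function.update_of_ne (Ne.symm h2)]
        exact Nat.cast_nonneg _
  -- key: γ * N j ≤ N (j+1)
  have hγ' : γ * (N j : ℝ) ≤ (N (j + 1) : ℝ) := by
    rwa [← le_div_iff₀ hNj]
  have hdiv : (δ:ℝ) * γ / (N (j + 1) : ℝ) ≤ (δ:ℝ) / (N j : ℝ) := by
    rw [div_le_div_iff₀ hNj1 hNj]
    nlinarith
  -- S2 sums are ≤ S1 sums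
  have hle : ∀ k : ℕ, ∑ i ∈ range (k + 1), S2 i / (N i : ℝ) ≤
      ∑ i ∈ range (k + 1), S1 i / (N i : ℝ) := by
    intro k
    rw [hsum k]
    have hd0 : (0:ℝ) ≤ (δ:ℝ) / (N j : ℝ) := div_nonneg hδ0 (le_of_lt hNj)
    split_ifs with h1 h2 h3
    · linarith
    · linarith
    · exact absurd (by simp only [mem_range] at h3 ⊢; omega) h1
    · linarith
  apply Finset.sum_lt_sum
  · intro k hk
    have hk' := mem_range.1 hk
    exact mul_le_mul_of_nonneg_left
      (Dstar_le hPfa hPfaPd hPd (hnn k) (hle k) (ht1 k hk')) (Nat.cast_nonneg _)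
  · refine ⟨j, mem_range.2 (by omega), ?_⟩
    have hjstrict : ∑ i ∈ range (j + 1), S2 i / (N i : ℝ) <
        ∑ i ∈ range (j + 1), S1 i / (N i : ℝ) := by
      rw [hsum j, if_pos (mem_range.2 (by omega)), if_neg (by simp [mem_range])]
      have hpos : 0 < (δ:ℝ) / (N j : ℝ) := div_pos hδpos hNj
      linarith
    exact mul_lt_mul_of_pos_left
      (Dstar_lt hPfa hPfaPd hPd (hnn j) hjstrict (ht1 j (by omega)))
      (by exact_mod_cast hN j (by omega))
end

section
/- Consider a K-level regular tree with N_{k+1} = a_{k+1}·N_k for integer degrees a_{k+1} ≥ 2, per-level positive costs c̃_1,…,c̃_K satisfying max_k c̃_k ≤ (min_{k<K} N_{k+1}/N_k)·min_k c̃_k, attacker budget C ≥ 0, per-node probabilities 0 < P_fa < P_d < 1, and total KLD D(B) = Σ_{k=1}^K N_k · D*(Σ_{i=1}^k B_i/N_i) where D*(t) is the Bernoulli KL divergence between P_fa + t(1−2P_fa) and P_d + t(1−2P_d). Define the greedy configuration B̂ recursively by B̂_1 = ⌊C/c̃_1⌋ and B̂_k = ⌊(C − Σ_{j<k} c̃_j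 B̂_j)/c̃_k⌋ for k ≥ 2. If B̂ is feasible (B̂_k ≤ N_k for all k) and every feasible configuration B (i.e., integer B with 0 ≤ B_k ≤ N_k and Σ_k c̃_k B_k ≤ C) satisfies Σ_{i=1}^k B_i/N_i < 1/2 for all k, then B̂ minimizes D over all feasible configurations: D(B̂) ≤ D(B) for every feasible B. -/
/-!
`D*` is convex on `[0, 1]` (the log-sum inequality makes the Bernoulli KL divergence jointly
convex, and `t ↦ (π₀(t), π₁(t))` is affine) and invariant under `t ↦ 1 - t`, hence nonincreasing
on `[0, 1/2]`. So it suffices that the greedy configuration maximizes every prefix fraction `t_k`.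
The numbers `R_k(B) = N_k t_k(B)` are integers, and by induction on `k` one shows
`R_k(B) ≤ R_k(B̂)` together with `∑_{i ≤ k} c̃_i (B̂_i - B_i) ≤ c̃_k (R_k(B̂) - R_k(B))`:
the cost condition `c̃_k ≤ a_{k+1} c̃_{k+1}` carries the cost bound one level down, and
`R_k(B̂) < R_k(B)` would force `B̂` to leave at least `c̃_k` of the budget unused after level `k`,
contradicting the floor defining `B̂_k`.
-/

open Finset

theorem ConvexOn.perspective_combo_le {s : Set ℝ} {f : ℝ → ℝ} (hf : ConvexOn ℝ s f)
    {x₁ x₂ y₁ y₂ a b : ℝ} (hy₁ : 0 < y₁) (hy₂ : 0 < y₂) (h₁ : x₁ / y₁ ∈ s) (h₂ : x₂ / y₂ ∈ s)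
    (ha : 0 ≤ a) (hb : 0 ≤ b) (hab : a + b = 1) :
    (a * y₁ + b * y₂) * f ((a * x₁ + b * x₂) / (a * y₁ + b * y₂)) ≤
      a * (y₁ * f (x₁ / y₁)) + b * (y₂ * f (x₂ / y₂)) := by
  set Y := a * y₁ + b * y₂
  have hY : 0 < Y := by
    rcases ha.eq_or_lt with rfl | ha'
    · simp only [zero_add] at hab; simp [Y, hab, hy₂]
    · positivity
  have hw : a * y₁ / Y + b * y₂ / Y = 1 := by rw [← add_div, div_self hY.ne']
  have hconv := hf.2 h₁ h₂ (by positivity) (by positivity) hw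
  have hcomb : (a * y₁ / Y) • (x₁ / y₁) + (b * y₂ / Y) • (x₂ / y₂) = (a * x₁ + b * x₂) / Y := by
    simp only [smul_eq_mul]; field_simp
  rw [hcomb, smul_eq_mul, smul_eq_mul] at hconv
  calc Y * f ((a * x₁ + b * x₂) / Y)
      ≤ Y * (a * y₁ / Y * f (x₁ / y₁) + b * y₂ / Y * f (x₂ / y₂)) := by gcongr
    _ = a * (y₁ * f (x₁ / y₁)) + b * (y₂ * f (x₂ / y₂)) := by field_simp

theorem mul_log_div_combo_le {x₁ x₂ y₁ y₂ a b : ℝ} (hx₁ : 0 ≤ x₁) (hx₂ : 0 ≤ x₂)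
    (hy₁ : 0 < y₁) (hy₂ : 0 < y₂) (ha : 0 ≤ a) (hb : 0 ≤ b) (hab : a + b = 1) :
    (a * x₁ + b * x₂) * Real.log ((a * x₁ + b * x₂) / (a * y₁ + b * y₂)) ≤
      a * (x₁ * Real.log (x₁ / y₁)) + b * (x₂ * Real.log (x₂ / y₂)) := by
  have h := Real.convexOn_mul_log.perspective_combo_le (x₁ := x₁) (x₂ := x₂) hy₁ hy₂
    (Set.mem_Ici.2 (by positivity)) (Set.mem_Ici.2 (by positivity)) ha hb hab
  have hpersp (x y : ℝ) : y * (x / y * Real.log (x / y)) = x * Real.log (x / y) := by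
    rcases eq_or_ne y 0 with rfl | hy
    · simp
    · field_simp
  rwa [hpersp, hpersp, hpersp] at h

theorem klBern_combo_le {p₁ p₂ q₁ q₂ a b : ℝ} (hp₁ : p₁ ∈ Set.Icc (0 : ℝ) 1)
    (hp₂ : p₂ ∈ Set.Icc (0 : ℝ) 1) (hq₁ : q₁ ∈ Set.Ioo (0 : ℝ) 1) (hq₂ : q₂ ∈ Set.Ioo (0 : ℝ) 1)
    (ha : 0 ≤ a) (hb : 0 ≤ b) (hab : a + b = 1) :
    klBern (a * p₁ + b * p₂) (a * q₁ + b * q₂) ≤ a * klBern p₁ q₁ + b * klBern p₂ q₂ := by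
  have hsucc := mul_log_div_combo_le hp₁.1 hp₂.1 hq₁.1 hq₂.1 ha hb hab
  have hfail := mul_log_div_combo_le (x₁ := 1 - p₁) (x₂ := 1 - p₂) (y₁ := 1 - q₁) (y₂ := 1 - q₂)
    (by linarith [hp₁.2]) (by linarith [hp₂.2]) (by linarith [hq₁.2]) (by linarith [hq₂.2])
    ha hb hab
  have hp : 1 - (a * p₁ + b * p₂) = a * (1 - p₁) + b * (1 - p₂) := by linear_combination -hab
  have hq : 1 - (a * q₁ + b * q₂) = a * (1 - q₁) + b * (1 - q₂) := by linear_combination -hab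
  simp only [klBern, hp, hq]
  linarith

theorem klBern_one_sub (p q : ℝ) : klBern (1 - p) (1 - q) = klBern p q := by
  simp only [klBern, sub_sub_cancel, add_comm]

theorem Dstar_one_sub (Pfa Pd t : ℝ) : Dstar Pfa Pd (1 - t) = Dstar Pfa Pd t := by
  rw [Dstar, Dstar, ← klBern_one_sub]
  congr 1 <;> ring

theorem Convex.add_mul_one_sub_two_mul_mem {s : Set ℝ} (hs : Convex ℝ s)
    (hsymm : ∀ u ∈ s, 1 - u ∈ s) {u t : ℝ} (hu : u ∈ s) (ht : t ∈ Set.Icc (0 : ℝ) 1) :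
    u + t * (1 - 2 * u) ∈ s := by
  convert hs hu (hsymm u hu) (sub_nonneg.2 ht.2) ht.1 (sub_add_cancel 1 t) using 1
  simp only [smul_eq_mul]; ring

theorem convexOn_Dstar {Pfa Pd : ℝ} (hPfa : Pfa ∈ Set.Icc (0 : ℝ) 1)
    (hPd : Pd ∈ Set.Ioo (0 : ℝ) 1) : ConvexOn ℝ (Set.Icc 0 1) (Dstar Pfa Pd) := by
  refine ⟨convex_Icc 0 1, fun t₁ ht₁ t₂ ht₂ a b ha hb hab => ?_⟩
  have hp {t : ℝ} (ht : t ∈ Set.Icc (0 : ℝ) 1) : Pfa + t * (1 - 2 * Pfa) ∈ Set.Icc (0 : ℝ) 1 :=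
    (convex_Icc 0 1).add_mul_one_sub_two_mul_mem
      (fun u hu => ⟨by linarith [hu.2], by linarith [hu.1]⟩) hPfa ht
  have hq {t : ℝ} (ht : t ∈ Set.Icc (0 : ℝ) 1) : Pd + t * (1 - 2 * Pd) ∈ Set.Ioo (0 : ℝ) 1 :=
    (convex_Ioo 0 1).add_mul_one_sub_two_mul_mem
      (fun u hu => ⟨by linarith [hu.2], by linarith [hu.1]⟩) hPd ht
  have haff (u : ℝ) : u + (a * t₁ + b * t₂) * (1 - 2 * u) =
      a * (u + t₁ * (1 - 2 * u)) + b * (u + t₂ * (1 - 2 * u)) := by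
    linear_combination (-u) * hab
  simp only [Dstar, smul_eq_mul, haff]
  exact klBern_combo_le (hp ht₁) (hp ht₂) (hq ht₁) (hq ht₂) ha hb hab

theorem ConvexOn.antitoneOn_of_one_sub {f : ℝ → ℝ} (hf : ConvexOn ℝ (Set.Icc 0 1) f)
    (hsymm : ∀ t ∈ Set.Icc (0 : ℝ) 1, f (1 - t) = f t) : AntitoneOn f (Set.Icc 0 (1 / 2)) := by
  intro s hs t ht hst
  have hs₁ : s ∈ Set.Icc (0 : ℝ) 1 := ⟨hs.1, by linarith [hs.2]⟩
  have hseg : t ∈ segment ℝ s (1 - s) := by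
    rw [segment_eq_Icc (by linarith [hs.2])]
    exact ⟨hst, by linarith [ht.2, hs.2]⟩
  calc f t ≤ max (f s) (f (1 - s)) :=
        hf.le_on_segment hs₁ ⟨by linarith [hs₁.2], by linarith [hs.1]⟩ hseg
    _ = f s := by rw [hsymm s hs₁, max_self]

theorem Dstar_antitoneOn {Pfa Pd : ℝ} (hPfa : Pfa ∈ Set.Icc (0 : ℝ) 1)
    (hPd : Pd ∈ Set.Ioo (0 : ℝ) 1) : AntitoneOn (Dstar Pfa Pd) (Set.Icc 0 (1 / 2)) :=
  (convexOn_Dstar hPfa hPd).antitoneOn_of_one_sub fun t _ => Dstar_one_sub Pfa Pd t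

/-- `N k * ∑_{i ≤ k} B i / N i` as a natural number, computed level by level in a tree with
`N (k + 1) = a (k + 1) * N k`. -/
def coveredRoutes (a B : ℕ → ℕ) : ℕ → ℕ
  | 0 => B 0
  | k + 1 => a (k + 1) * coveredRoutes a B k + B (k + 1)

theorem coveredRoutes_eq {K : ℕ} {N a : ℕ → ℕ} (hN : ∀ k < K, 0 < N k)
    (ha : ∀ k, k + 1 < K → N (k + 1) = a (k + 1) * N k) (B : ℕ → ℕ) :
    ∀ k < K, (coveredRoutes a B k : ℝ) = N k * ∑ i ∈ range (k + 1), (B i : ℝ) / N i := by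
  intro k
  induction k with
  | zero =>
    intro hK
    have : (N 0 : ℝ) ≠ 0 := by exact_mod_cast (hN 0 hK).ne'
    simp [coveredRoutes, field]
  | succ k ih =>
    intro hK
    have hNk : (N (k + 1) : ℝ) ≠ 0 := by exact_mod_cast (hN (k + 1) hK).ne'
    rw [sum_range_succ, mul_add, mul_div_cancel₀ _ hNk, coveredRoutes, ha k hK]
    push_cast
    rw [ih (by omega)]
    ring

section Greedy

variable {K k : ℕ} {c : ℕ → ℝ} {C : ℝ} {B Bhat : ℕ → ℕ}

theorem greedy_budget_lt (hck : 0 < c k)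
    (hk : Bhat k = ⌊(C - ∑ j ∈ range k, c j * Bhat j) / c k⌋₊) :
    C < ∑ j ∈ range (k + 1), c j * Bhat j + c k := by
  have h := Nat.lt_floor_add_one ((C - ∑ j ∈ range k, c j * Bhat j) / c k)
  rw [← hk, div_lt_iff₀ hck] at h
  rw [sum_range_succ]
  linarith

theorem le_of_greedy_cost_le (hc : ∀ j < K, 0 < c j) (hk : k < K)
    (hBhat : Bhat k = ⌊(C - ∑ j ∈ range k, c j * Bhat j) / c k⌋₊)
    (hB : ∑ j ∈ range K, c j * B j ≤ C) {m m' : ℕ}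
    (hcost : ∑ i ∈ range (k + 1), c i * ((Bhat i : ℝ) - B i) ≤ c k * ((m' : ℝ) - m)) :
    m ≤ m' := by
  by_contra! hlt
  have hprefix : ∑ j ∈ range (k + 1), c j * B j ≤ C :=
    (sum_le_sum_of_subset_of_nonneg (range_subset_range.2 hk)
      fun j hj _ => mul_nonneg (hc j (mem_range.1 hj)).le (Nat.cast_nonneg _)).trans hB
  have hgap : c k * ((m' : ℝ) - m) ≤ -c k := by
    have : (m' : ℝ) + 1 ≤ m := by exact_mod_cast hlt
    nlinarith [hc k hk]
  simp only [mul_sub, sum_sub_distrib] at hcost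
  linarith [greedy_budget_lt (hc k hk) hBhat]

theorem greedy_cost_succ_le {a : ℕ → ℕ} (hratio : c k ≤ a (k + 1) * c (k + 1))
    (hle : coveredRoutes a B k ≤ coveredRoutes a Bhat k)
    (hcost : ∑ i ∈ range (k + 1), c i * ((Bhat i : ℝ) - B i) ≤
      c k * ((coveredRoutes a Bhat k : ℝ) - coveredRoutes a B k)) :
    ∑ i ∈ range (k + 2), c i * ((Bhat i : ℝ) - B i) ≤
      c (k + 1) * ((coveredRoutes a Bhat (k + 1) : ℝ) - coveredRoutes a B (k + 1)) := by
  have hdiff : (0 : ℝ) ≤ (coveredRoutes a Bhat k : ℝ) - coveredRoutes a B k := by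
    rw [sub_nonneg]; exact_mod_cast hle
  have := mul_le_mul_of_nonneg_right hratio hdiff
  rw [sum_range_succ, coveredRoutes, coveredRoutes]
  push_cast
  linarith

theorem coveredRoutes_le_greedy {a : ℕ → ℕ} (hc : ∀ j < K, 0 < c j)
    (hratio : ∀ k, k + 1 < K → c k ≤ a (k + 1) * c (k + 1))
    (hBhat : ∀ k < K, Bhat k = ⌊(C - ∑ j ∈ range k, c j * Bhat j) / c k⌋₊)
    (hB : ∑ j ∈ range K, c j * B j ≤ C) :
    ∀ k < K, coveredRoutes a B k ≤ coveredRoutes a Bhat k := by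
  suffices hcost : ∀ k < K, ∑ i ∈ range (k + 1), c i * ((Bhat i : ℝ) - B i) ≤
      c k * ((coveredRoutes a Bhat k : ℝ) - coveredRoutes a B k) from
    fun k hk => le_of_greedy_cost_le hc hk (hBhat k hk) hB (hcost k hk)
  intro k
  induction k with
  | zero => intro _; simp [coveredRoutes]
  | succ k ih =>
    intro hk
    have hcost := ih (by omega)
    exact greedy_cost_succ_le (hratio k hk)
      (le_of_greedy_cost_le hc (by omega) (hBhat k (by omega)) hB hcost) hcost

end Greedy

theorem stmt_15_general (Pfa Pd : ℝ)
    (hPfa : 0 < Pfa) (hPfaPd : Pfa < Pd) (hPd : Pd < 1)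
    (K : ℕ)
    (N a : ℕ → ℕ) (hN : ∀ k < K, 1 ≤ N k)
    (ha : ∀ k, k + 1 < K → 2 ≤ a (k + 1) ∧ N (k + 1) = a (k + 1) * N k)
    (c : ℕ → ℝ) (hc : ∀ k < K, 0 < c k)
    (hcost : ∀ i < K, ∀ j < K, ∀ m, m + 1 < K →
      c i ≤ ((N (m + 1) : ℝ) / (N m : ℝ)) * c j)
    (C : ℝ)
    (Bhat : ℕ → ℕ)
    (hBhat : ∀ k < K,
      Bhat k = ⌊(C - ∑ j ∈ range k, c j * (Bhat j : ℝ)) / c k⌋₊)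
    (hBhatFeas : ∀ k < K, Bhat k ≤ N k)
    (hBhatBudget : ∑ k ∈ range K, c k * (Bhat k : ℝ) ≤ C)
    (hblind : ∀ B : ℕ → ℕ, (∀ k < K, B k ≤ N k) →
      (∑ k ∈ range K, c k * (B k : ℝ) ≤ C) →
      ∀ k < K, ∑ i ∈ range (k + 1), (B i : ℝ) / (N i : ℝ) < 1 / 2) :
    ∀ B : ℕ → ℕ, (∀ k < K, B k ≤ N k) →
      (∑ k ∈ range K, c k * (B k : ℝ) ≤ C) →
      ∑ k ∈ range K, (N k : ℝ) *
          Dstar Pfa Pd (∑ i ∈ range (k + 1), (Bhat i : ℝ) / (N i : ℝ)) ≤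
        ∑ k ∈ range K, (N k : ℝ) *
          Dstar Pfa Pd (∑ i ∈ range (k + 1), (B i : ℝ) / (N i : ℝ)) := by
  intro B _ hB
  have hNpos : ∀ k < K, 0 < N k := hN
  have hNa : ∀ k, k + 1 < K → N (k + 1) = a (k + 1) * N k := fun k hk => (ha k hk).2
  have hratio : ∀ k, k + 1 < K → c k ≤ a (k + 1) * c (k + 1) := fun k hk => by
    have hNk : (N k : ℝ) ≠ 0 := by exact_mod_cast (hNpos k (by omega)).ne'
    simpa [hNa k hk, hNk] using hcost k (by omega) (k + 1) hk k hk
  have hroutes := coveredRoutes_le_greedy hc hratio hBhat hB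
  refine sum_le_sum fun k hk => mul_le_mul_of_nonneg_left ?_ (Nat.cast_nonneg _)
  have hkK := mem_range.1 hk
  have hprefix :
      ∑ i ∈ range (k + 1), (B i : ℝ) / N i ≤ ∑ i ∈ range (k + 1), (Bhat i : ℝ) / N i := by
    rw [← mul_le_mul_iff_right₀ (by exact_mod_cast hNpos k hkK : (0 : ℝ) < N k),
      ← coveredRoutes_eq hNpos hNa B k hkK, ← coveredRoutes_eq hNpos hNa Bhat k hkK]
    exact_mod_cast hroutes k hkK
  have hhalf := hblind Bhat hBhatFeas hBhatBudget k hkK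
  have hnonneg : 0 ≤ ∑ i ∈ range (k + 1), (B i : ℝ) / N i := by positivity
  exact Dstar_antitoneOn ⟨hPfa.le, by linarith⟩ ⟨by linarith, hPd⟩
    ⟨hnonneg, by linarith⟩ ⟨hnonneg.trans hprefix, hhalf.le⟩ hprefix

/-- In a `K`-level regular tree whose costs satisfy
`max c̃ ≤ (min_{k} N_{k+1}/N_k) · min c̃`, the greedy top-down configuration
`B̂_k = ⌊(C − ∑_{j<k} c̃_j B̂_j)/c̃_k⌋` minimizes the total KL divergence
`D(B) = ∑ₖ Nₖ · D*(∑_{i≤k} Bᵢ/Nᵢ)` over all budget-feasible configurations,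
provided no feasible configuration can blind the fusion center.
(Levels are indexed `0,…,K-1`.) -/
theorem stmt_15 (Pfa Pd : ℝ)
    (hPfa : 0 < Pfa) (hPfaPd : Pfa < Pd) (hPd : Pd < 1)
    (K : ℕ) (hK : 1 ≤ K)
    (N a : ℕ → ℕ) (hN : ∀ k < K, 1 ≤ N k)
    (ha : ∀ k, k + 1 < K → 2 ≤ a (k + 1) ∧ N (k + 1) = a (k + 1) * N k)
    (c : ℕ → ℝ) (hc : ∀ k < K, 0 < c k)
    (hcost : ∀ i < K, ∀ j < K, ∀ m, m + 1 < K →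
      c i ≤ ((N (m + 1) : ℝ) / (N m : ℝ)) * c j)
    (C : ℝ) (hC : 0 ≤ C)
    (Bhat : ℕ → ℕ)
    (hBhat : ∀ k < K,
      Bhat k = ⌊(C - ∑ j ∈ range k, c j * (Bhat j : ℝ)) / c k⌋₊)
    (hBhatFeas : ∀ k < K, Bhat k ≤ N k)
    (hBhatBudget : ∑ k ∈ range K, c k * (Bhat k : ℝ) ≤ C)
    (hblind : ∀ B : ℕ → ℕ, (∀ k < K, B k ≤ N k) →
      (∑ k ∈ range K, c k * (B k : ℝ) ≤ C) →
      ∀ k < K, ∑ i ∈ range (k + 1), (B i : ℝ) / (N i : ℝ) < 1 / 2) :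
    ∀ B : ℕ → ℕ, (∀ k < K, B k ≤ N k) →
      (∑ k ∈ range K, c k * (B k : ℝ) ≤ C) →
      ∑ k ∈ range K, (N k : ℝ) *
          Dstar Pfa Pd (∑ i ∈ range (k + 1), (Bhat i : ℝ) / (N i : ℝ)) ≤
        ∑ k ∈ range K, (N k : ℝ) *
          Dstar Pfa Pd (∑ i ∈ range (k + 1), (B i : ℝ) / (N i : ℝ)) :=
  stmt_15_general Pfa Pd hPfa hPfaPd hPd K N a hN ha c hc hcost C Bhat hBhat hBhatFeas hBhatBudget
    hblind
end
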